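/- arXiv:1012.3661 — 12 statements merged into one kernel-verified Lean document; each statement's English description precedes it below -/
import Mathlib

section
/- Let a, b, c, d, f, g : ℝ → ℝ be continuous real-valued functions of time and h₀ a real constant. Suppose α, β, γ, δ, ε, κ : ℝ → ℝ are differentiable and satisfy the Riccati-type system: α' + b + 2cα + 4aα² = 0, β' + (c + 4aα)β = 0, γ' + aβ² = 0, δ' + (c + 4aα)δ = f + 2αg, ε' = (g − 2aδ)β, κ' = gδ − aδ². Suppose μ : ℝ → ℝ is positive, differentiable, and satisfies μ' = (4aα + 2d)μ, and set h(t) = h₀ a(t) β(t)² μ(t). If χ : ℝ × ℝ → ℂ is twice continuously differentiable and satisfies the autonomous nonlinear Schrödinger equation i∂χ/∂τ + h₀|χ|²χ = ∂²χ/∂ξ², then the function ψ(x,t) = μ(t)^{−1/2} e^{i(α(t)x² + δ(t)x + κ(t))} χ(β(t)x + ε(t), γ(t)) satisfies the nonautonomous nonlinear Schrödinger equation i∂ψ/∂t = −a(t)∂²ψ/∂x² + b(t)x²ψ − ic(t)x∂ψ/∂x − id(t)ψ − f(t)xψ + ig(t)∂ψ/∂x + h(t)|ψ|²ψ. -/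
/-!
Write `ψ = G · χ(βx + ε, γ)` with the gauge factor `G = μ^{-1/2} e^{i(αx² + δx + κ)}`. The chain and
product rules express `ψ_t`, `ψ_x` and `ψ_xx` as `G` times combinations of `χ`, `χ_ξ`, `χ_τ`,
`χ_ξξ`, and `|G|² = 1/μ`. After substitution, the Riccati system makes the coefficients of `χ` and
`χ_ξ` in the nonautonomous equation vanish (`α`, `δ`, `κ`, `μ` for `χ`; `β`, `ε` for `χ_ξ`), and
`γ' = -aβ²` leaves `aβ²G(χ_ξξ - iχ_τ)`, which the autonomous equation turns into
`h₀aβ²|χ|²Gχ = h|ψ|²ψ`.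
-/

open Complex Function

section TwoVariableCalculus

variable {E : Type*} [NormedAddCommGroup E] [NormedSpace ℝ E] {F : ℝ → ℝ → E} {p q : ℝ}

theorem hasDerivAt_fst_of_differentiableAt_uncurry
    (hF : DifferentiableAt ℝ (uncurry F) (p, q)) :
    HasDerivAt (fun z => F z q) (fderiv ℝ (uncurry F) (p, q) (1, 0)) p :=
  hF.hasFDerivAt.comp_hasDerivAt (f := fun z => (z, q)) p
    ((hasDerivAt_id p).prodMk (hasDerivAt_const p q))

theorem hasDerivAt_snd_of_differentiableAt_uncurry
    (hF : DifferentiableAt ℝ (uncurry F) (p, q)) :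
    HasDerivAt (F p) (fderiv ℝ (uncurry F) (p, q) (0, 1)) q :=
  hF.hasFDerivAt.comp_hasDerivAt (f := fun s => (p, s)) q
    ((hasDerivAt_const q p).prodMk (hasDerivAt_id q))

theorem hasDerivAt_uncurry_comp {u v : ℝ → ℝ} {u' v' t : ℝ}
    (hF : DifferentiableAt ℝ (uncurry F) (u t, v t))
    (hu : HasDerivAt u u' t) (hv : HasDerivAt v v' t) :
    HasDerivAt (fun s => F (u s) (v s))
      (u' • deriv (fun z => F z (v t)) (u t) + v' • deriv (F (u t)) (v t)) t := by
  have hcomp := hF.hasFDerivAt.comp_hasDerivAt t (hu.prodMk hv)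
  rwa [(hasDerivAt_fst_of_differentiableAt_uncurry hF).deriv,
    (hasDerivAt_snd_of_differentiableAt_uncurry hF).deriv, ← map_smul, ← map_smul, ← map_add,
    Prod.smul_mk, Prod.smul_mk, Prod.mk_add_mk, smul_zero, smul_zero, add_zero, zero_add,
    smul_eq_mul, smul_eq_mul, mul_one, mul_one]

theorem ContDiff.differentiable_deriv_fst (hF : ContDiff ℝ 2 (uncurry F)) (q : ℝ) :
    Differentiable ℝ (deriv (fun z => F z q)) := by
  have hdiff : Differentiable ℝ (uncurry F) := hF.differentiable (by norm_num)
  have hfd : Differentiable ℝ (fderiv ℝ (uncurry F)) :=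
    (hF.fderiv_right (m := 1) (by norm_num)).differentiable one_ne_zero
  have : deriv (fun z => F z q) = fun p => fderiv ℝ (uncurry F) (p, q) (1, 0) :=
    funext fun p => (hasDerivAt_fst_of_differentiableAt_uncurry (hdiff _)).deriv
  rw [this]
  fun_prop

end TwoVariableCalculus

noncomputable def gaugeFactor (μ α δ κ : ℝ → ℝ) (x t : ℝ) : ℂ :=
  (Real.sqrt (μ t) : ℂ)⁻¹ * exp (I * ((α t : ℂ) * (x : ℂ) ^ 2 + (δ t : ℂ) * (x : ℂ) + (κ t : ℂ)))

section GaugeFactor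

variable {μ α δ κ : ℝ → ℝ} {x t : ℝ}

theorem hasDerivAt_gaugeFactor_fst :
    HasDerivAt (fun y => gaugeFactor μ α δ κ y t)
      (I * (2 * α t * x + δ t) * gaugeFactor μ α δ κ x t) x := by
  have hphase : HasDerivAt (fun y : ℂ => I * (α t * y ^ 2 + δ t * y + κ t))
      (I * (2 * α t * x + δ t)) x := by
    refine ((((hasDerivAt_pow 2 (x : ℂ)).const_mul (α t : ℂ)).add
      ((hasDerivAt_id (x : ℂ)).const_mul (δ t : ℂ))).add_const (κ t : ℂ)).const_mul I
      |>.congr_deriv ?_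
    push_cast; ring
  refine (hphase.comp_ofReal.cexp.const_mul (Real.sqrt (μ t) : ℂ)⁻¹).congr_deriv ?_
  simp only [gaugeFactor]; ring

theorem hasDerivAt_gaugeFactor_snd {ν α' δ' κ' : ℝ} (hμpos : 0 < μ t)
    (hμ : HasDerivAt μ (2 * ν * μ t) t) (hα : HasDerivAt α α' t) (hδ : HasDerivAt δ δ' t)
    (hκ : HasDerivAt κ κ' t) :
    HasDerivAt (fun s => gaugeFactor μ α δ κ x s)
      ((I * (α' * x ^ 2 + δ' * x + κ') - ν) * gaugeFactor μ α δ κ x t) t := by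
  have hsqrt_sq : (Real.sqrt (μ t) : ℂ) ^ 2 = μ t := by exact_mod_cast Real.sq_sqrt hμpos.le
  have hsqrt_ne : (Real.sqrt (μ t) : ℂ) ≠ 0 :=
    ofReal_ne_zero.mpr (Real.sqrt_pos.mpr hμpos).ne'
  have hamp := ((hμ.sqrt hμpos.ne').ofReal_comp).inv hsqrt_ne
  have hphase : HasDerivAt (fun s => I * (α s * x ^ 2 + δ s * x + κ s))
      (I * (α' * x ^ 2 + δ' * x + κ')) t :=
    (((hα.ofReal_comp.mul_const (x ^ 2 : ℂ)).add (hδ.ofReal_comp.mul_const (x : ℂ))).add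
      hκ.ofReal_comp).const_mul I
  refine (hamp.mul hphase.cexp).congr_deriv ?_
  simp only [gaugeFactor, Pi.inv_apply]
  push_cast
  rw [← hsqrt_sq]
  field_simp
  ring

theorem norm_gaugeFactor_sq (hμpos : 0 < μ t) :
    ‖gaugeFactor μ α δ κ x t‖ ^ 2 = (μ t)⁻¹ := by
  have hunit : ‖exp (I * ((α t : ℂ) * (x : ℂ) ^ 2 + (δ t : ℂ) * (x : ℂ) + (κ t : ℂ)))‖ = 1 := by
    have := norm_exp_ofReal_mul_I (α t * x ^ 2 + δ t * x + κ t)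
    push_cast at this
    rwa [mul_comm]
  rw [gaugeFactor, norm_mul, hunit, mul_one, norm_inv, norm_real, Real.norm_eq_abs,
    abs_of_nonneg (Real.sqrt_nonneg _), inv_pow, Real.sq_sqrt hμpos.le]

end GaugeFactor

noncomputable def gaugeTransform (μ α β γ δ ε κ : ℝ → ℝ) (χ : ℝ → ℝ → ℂ) (x t : ℝ) : ℂ :=
  gaugeFactor μ α δ κ x t * χ (β t * x + ε t) (γ t)

section GaugeTransform

variable {μ α β γ δ ε κ : ℝ → ℝ} {χ : ℝ → ℝ → ℂ} {x t : ℝ}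

theorem deriv_gaugeTransform_fst (hχ : Differentiable ℝ (uncurry χ)) :
    (deriv fun y => gaugeTransform μ α β γ δ ε κ χ y t) = fun x =>
      gaugeFactor μ α δ κ x t * (I * (2 * α t * x + δ t) * χ (β t * x + ε t) (γ t)
        + β t * deriv (fun ξ => χ ξ (γ t)) (β t * x + ε t)) := by
  funext x
  refine HasDerivAt.deriv ?_
  have hinner : HasDerivAt (fun y => β t * y + ε t) (β t) x := by
    simpa using ((hasDerivAt_id x).const_mul (β t)).add_const (ε t)
  have hχx := hasDerivAt_uncurry_comp (hχ _) hinner (hasDerivAt_const x (γ t))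
  refine (hasDerivAt_gaugeFactor_fst.mul hχx).congr_deriv ?_
  simp only [real_smul, zero_smul, add_zero]
  ring

theorem hasDerivAt_deriv_gaugeTransform_fst (hχ : ContDiff ℝ 2 (uncurry χ)) :
    HasDerivAt (deriv fun y => gaugeTransform μ α β γ δ ε κ χ y t)
      (gaugeFactor μ α δ κ x t *
        ((2 * I * α t - (2 * α t * x + δ t) ^ 2) * χ (β t * x + ε t) (γ t)
          + 2 * I * (2 * α t * x + δ t) * β t * deriv (fun ξ => χ ξ (γ t)) (β t * x + ε t)
          + β t ^ 2 * deriv (deriv fun ξ => χ ξ (γ t)) (β t * x + ε t))) x := by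
  have hdiff : Differentiable ℝ (uncurry χ) := hχ.differentiable (by norm_num)
  have hinner : HasDerivAt (fun y => β t * y + ε t) (β t) x := by
    simpa using ((hasDerivAt_id x).const_mul (β t)).add_const (ε t)
  have hχx := hasDerivAt_uncurry_comp (hdiff _) hinner (hasDerivAt_const x (γ t))
  have hχξx := ((hχ.differentiable_deriv_fst (γ t)) (β t * x + ε t)).hasDerivAt.scomp x hinner
  have hlin : HasDerivAt (fun y : ℝ => I * (2 * α t * y + δ t)) (I * (2 * α t)) x := by
    simpa using ((((hasDerivAt_id x).const_mul (2 * α t)).add_const (δ t)).ofReal_comp).const_mul I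
  rw [deriv_gaugeTransform_fst hdiff]
  refine (hasDerivAt_gaugeFactor_fst.mul ((hlin.mul hχx).add (hχξx.const_mul (β t : ℂ))))
    |>.congr_deriv ?_
  simp only [real_smul, zero_smul, add_zero, comp_apply, Pi.add_apply, Pi.mul_apply]
  linear_combination (gaugeFactor μ α δ κ x t * (2 * α t * x + δ t) ^ 2
    * χ (β t * x + ε t) (γ t)) * I_sq

theorem hasDerivAt_gaugeTransform_snd {ν α' β' γ' δ' ε' κ' : ℝ}
    (hμpos : 0 < μ t) (hμ : HasDerivAt μ (2 * ν * μ t) t) (hα : HasDerivAt α α' t)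
    (hβ : HasDerivAt β β' t) (hγ : HasDerivAt γ γ' t) (hδ : HasDerivAt δ δ' t)
    (hε : HasDerivAt ε ε' t) (hκ : HasDerivAt κ κ' t) (hχ : Differentiable ℝ (uncurry χ)) :
    HasDerivAt (fun s => gaugeTransform μ α β γ δ ε κ χ x s)
      (gaugeFactor μ α δ κ x t *
        ((I * (α' * x ^ 2 + δ' * x + κ') - ν) * χ (β t * x + ε t) (γ t)
          + (β' * x + ε') * deriv (fun ξ => χ ξ (γ t)) (β t * x + ε t)
          + γ' * deriv (χ (β t * x + ε t)) (γ t))) t := by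
  have hχt := hasDerivAt_uncurry_comp (hχ _) ((hβ.mul_const x).add hε) hγ
  refine ((hasDerivAt_gaugeFactor_snd hμpos hμ hα hδ hκ).mul hχt).congr_deriv ?_
  simp only [real_smul, Pi.add_apply]
  push_cast
  ring

theorem norm_gaugeTransform_sq (hμpos : 0 < μ t) :
    ‖gaugeTransform μ α β γ δ ε κ χ x t‖ ^ 2 = (μ t)⁻¹ * ‖χ (β t * x + ε t) (γ t)‖ ^ 2 := by
  rw [gaugeTransform, norm_mul, mul_pow, norm_gaugeFactor_sq hμpos]

end GaugeTransform

theorem nonautonomous_NLS_transform_general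
    (a b c d f g : ℝ → ℝ) (h₀ : ℝ)
    (α β γ δ ε κ : ℝ → ℝ)
    (hα : Differentiable ℝ α) (hβ : Differentiable ℝ β) (hγ : Differentiable ℝ γ)
    (hδ : Differentiable ℝ δ) (hε : Differentiable ℝ ε) (hκ : Differentiable ℝ κ)
    (eqA : ∀ t, deriv α t + b t + 2 * c t * α t + 4 * a t * (α t) ^ 2 = 0)
    (eqB : ∀ t, deriv β t + (c t + 4 * a t * α t) * β t = 0)
    (eqC : ∀ t, deriv γ t + a t * (β t) ^ 2 = 0)
    (eqD : ∀ t, deriv δ t + (c t + 4 * a t * α t) * δ t = f t + 2 * α t * g t)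
    (eqE : ∀ t, deriv ε t = (g t - 2 * a t * δ t) * β t)
    (eqF : ∀ t, deriv κ t = g t * δ t - a t * (δ t) ^ 2)
    (μ : ℝ → ℝ) (hμpos : ∀ t, 0 < μ t) (hμ : Differentiable ℝ μ)
    (eqM : ∀ t, deriv μ t = (4 * a t * α t + 2 * d t) * μ t)
    (h : ℝ → ℝ) (hh : ∀ t, h t = h₀ * a t * (β t) ^ 2 * μ t)
    (χ : ℝ → ℝ → ℂ)
    (hχ : ContDiff ℝ 2 (fun p : ℝ × ℝ => χ p.1 p.2))
    (hNLS : ∀ ξ τ : ℝ, Complex.I * deriv (fun s => χ ξ s) τ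
        + (h₀ : ℂ) * (‖χ ξ τ‖ : ℂ) ^ 2 * χ ξ τ
        = deriv (fun y => deriv (fun z => χ z τ) y) ξ)
    (ψ : ℝ → ℝ → ℂ)
    (hψ : ∀ x t, ψ x t = (Real.sqrt (μ t) : ℂ)⁻¹
        * Complex.exp (Complex.I * ((α t : ℂ) * (x : ℂ) ^ 2 + (δ t : ℂ) * (x : ℂ) + (κ t : ℂ)))
        * χ (β t * x + ε t) (γ t)) :
    ∀ x t : ℝ, Complex.I * deriv (fun s => ψ x s) t
        = -(a t : ℂ) * deriv (fun y => deriv (fun z => ψ z t) y) x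
          + (b t : ℂ) * (x : ℂ) ^ 2 * ψ x t
          - Complex.I * (c t : ℂ) * (x : ℂ) * deriv (fun y => ψ y t) x
          - Complex.I * (d t : ℂ) * ψ x t
          - (f t : ℂ) * (x : ℂ) * ψ x t
          + Complex.I * (g t : ℂ) * deriv (fun y => ψ y t) x
          + (h t : ℂ) * (‖ψ x t‖ : ℂ) ^ 2 * ψ x t := by
  obtain rfl : ψ = gaugeTransform μ α β γ δ ε κ χ := funext fun x => funext (hψ x)
  intro x t
  have hχ' : Differentiable ℝ (uncurry χ) := hχ.differentiable (by norm_num)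
  have hμ' : HasDerivAt μ (2 * (2 * a t * α t + d t) * μ t) t :=
    (hμ t).hasDerivAt.congr_deriv (by rw [eqM]; ring)
  have hα' : HasDerivAt α (-b t - 2 * c t * α t - 4 * a t * α t ^ 2) t :=
    (hα t).hasDerivAt.congr_deriv (by linarith [eqA t])
  have hβ' : HasDerivAt β (-(c t + 4 * a t * α t) * β t) t :=
    (hβ t).hasDerivAt.congr_deriv (by linarith [eqB t])
  have hγ' : HasDerivAt γ (-a t * β t ^ 2) t :=
    (hγ t).hasDerivAt.congr_deriv (by linarith [eqC t])
  have hδ' : HasDerivAt δ (f t + 2 * α t * g t - (c t + 4 * a t * α t) * δ t) t :=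
    (hδ t).hasDerivAt.congr_deriv (by linarith [eqD t])
  have hε' : HasDerivAt ε ((g t - 2 * a t * δ t) * β t) t := eqE t ▸ (hε t).hasDerivAt
  have hκ' : HasDerivAt κ (g t * δ t - a t * δ t ^ 2) t := eqF t ▸ (hκ t).hasDerivAt
  have hcubic : (h t : ℂ) * (‖gaugeTransform μ α β γ δ ε κ χ x t‖ : ℂ) ^ 2
      = h₀ * a t * β t ^ 2 * (‖χ (β t * x + ε t) (γ t)‖ : ℂ) ^ 2 := by
    exact_mod_cast show h t * ‖gaugeTransform μ α β γ δ ε κ χ x t‖ ^ 2 = _ by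
      rw [hh, norm_gaugeTransform_sq (hμpos t)]; field_simp [(hμpos t).ne']
  rw [(hasDerivAt_gaugeTransform_snd (hμpos t) hμ' hα' hβ' hγ' hδ' hε' hκ' hχ').deriv,
    (hasDerivAt_deriv_gaugeTransform_fst hχ).deriv, deriv_gaugeTransform_fst hχ']
  unfold gaugeTransform at hcubic ⊢
  push_cast
  linear_combination (norm := (ring_nf; simp only [I_sq]; ring))
    (-(a t * β t ^ 2 * gaugeFactor μ α δ κ x t)) * hNLS (β t * x + ε t) (γ t)
    - gaugeFactor μ α δ κ x t * χ (β t * x + ε t) (γ t) * hcubic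

/-- The substitution
`ψ(x,t) = μ(t)^{-1/2} e^{i(α(t)x² + δ(t)x + κ(t))} χ(β(t)x + ε(t), γ(t))`
transforms solutions of the autonomous nonlinear Schrödinger equation
`iχ_τ + h₀|χ|²χ = χ_ξξ` into solutions of the nonautonomous nonlinear Schrödinger
equation `iψ_t = -aψ_xx + bx²ψ - icxψ_x - idψ - fxψ + igψ_x + h|ψ|²ψ`,
provided the Riccati-type system holds and `h = h₀ a β² μ`. -/
theorem nonautonomous_NLS_transform
    (a b c d f g : ℝ → ℝ) (h₀ : ℝ)
    (ha : Continuous a) (hb : Continuous b) (hc : Continuous c)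
    (hd : Continuous d) (hf : Continuous f) (hg : Continuous g)
    (α β γ δ ε κ : ℝ → ℝ)
    (hα : Differentiable ℝ α) (hβ : Differentiable ℝ β) (hγ : Differentiable ℝ γ)
    (hδ : Differentiable ℝ δ) (hε : Differentiable ℝ ε) (hκ : Differentiable ℝ κ)
    (eqA : ∀ t, deriv α t + b t + 2 * c t * α t + 4 * a t * (α t) ^ 2 = 0)
    (eqB : ∀ t, deriv β t + (c t + 4 * a t * α t) * β t = 0)
    (eqC : ∀ t, deriv γ t + a t * (β t) ^ 2 = 0)
    (eqD : ∀ t, deriv δ t + (c t + 4 * a t * α t) * δ t = f t + 2 * α t * g t)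
    (eqE : ∀ t, deriv ε t = (g t - 2 * a t * δ t) * β t)
    (eqF : ∀ t, deriv κ t = g t * δ t - a t * (δ t) ^ 2)
    (μ : ℝ → ℝ) (hμpos : ∀ t, 0 < μ t) (hμ : Differentiable ℝ μ)
    (eqM : ∀ t, deriv μ t = (4 * a t * α t + 2 * d t) * μ t)
    (h : ℝ → ℝ) (hh : ∀ t, h t = h₀ * a t * (β t) ^ 2 * μ t)
    (χ : ℝ → ℝ → ℂ)
    (hχ : ContDiff ℝ 2 (fun p : ℝ × ℝ => χ p.1 p.2))
    (hNLS : ∀ ξ τ : ℝ, Complex.I * deriv (fun s => χ ξ s) τ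
        + (h₀ : ℂ) * (‖χ ξ τ‖ : ℂ) ^ 2 * χ ξ τ
        = deriv (fun y => deriv (fun z => χ z τ) y) ξ)
    (ψ : ℝ → ℝ → ℂ)
    (hψ : ∀ x t, ψ x t = (Real.sqrt (μ t) : ℂ)⁻¹
        * Complex.exp (Complex.I * ((α t : ℂ) * (x : ℂ) ^ 2 + (δ t : ℂ) * (x : ℂ) + (κ t : ℂ)))
        * χ (β t * x + ε t) (γ t)) :
    ∀ x t : ℝ, Complex.I * deriv (fun s => ψ x s) t
        = -(a t : ℂ) * deriv (fun y => deriv (fun z => ψ z t) y) x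
          + (b t : ℂ) * (x : ℂ) ^ 2 * ψ x t
          - Complex.I * (c t : ℂ) * (x : ℂ) * deriv (fun y => ψ y t) x
          - Complex.I * (d t : ℂ) * ψ x t
          - (f t : ℂ) * (x : ℂ) * ψ x t
          + Complex.I * (g t : ℂ) * deriv (fun y => ψ y t) x
          + (h t : ℂ) * (‖ψ x t‖ : ℂ) ^ 2 * ψ x t :=
  nonautonomous_NLS_transform_general a b c d f g h₀ α β γ δ ε κ hα hβ hγ hδ hε hκ eqA eqB eqC eqD
    eqE eqF μ hμpos hμ eqM h hh χ hχ hNLS ψ hψ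
end

section
/- Let a, b, c, d : ℝ → ℝ be differentiable with a(t) ≠ 0 for all t, and let μ : ℝ → ℝ be twice differentiable with μ(t) ≠ 0. Define α(t) = μ'(t)/(4a(t)μ(t)) − d(t)/(2a(t)). Then α satisfies the Riccati equation α' + b + 2cα + 4aα² = 0 if and only if μ satisfies the characteristic equation μ'' − τ(t)μ' + 4σ(t)μ = 0, where τ(t) = a'/a − 2c + 4d and σ(t) = ab − cd + d² + (d a')/(2a) − d'/2. -/
/-!
Write `α = μ'/(4aμ) - d/(2a)`. Differentiating by the quotient rule and multiplying the Riccati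
expression `α' + b + 2cα + 4aα²` by the nonvanishing factor `4aμ` gives exactly the left-hand
side of the characteristic equation, so one vanishes precisely when the other does.
-/

theorem hasDerivAt_riccati_substitution {a d μ : ℝ → ℝ} {t : ℝ}
    (ha : DifferentiableAt ℝ a t) (hd : DifferentiableAt ℝ d t)
    (hμ : DifferentiableAt ℝ μ t) (hμ' : DifferentiableAt ℝ (deriv μ) t)
    (hat : a t ≠ 0) (hμt : μ t ≠ 0) :
    HasDerivAt (fun t => deriv μ t / (4 * a t * μ t) - d t / (2 * a t))
      ((deriv (deriv μ) t * (4 * a t * μ t)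
          - deriv μ t * (4 * deriv a t * μ t + 4 * a t * deriv μ t)) / (4 * a t * μ t) ^ 2
        - (deriv d t * (2 * a t) - d t * (2 * deriv a t)) / (2 * a t) ^ 2) t := by
  have h4aμ : HasDerivAt (fun t => 4 * a t * μ t) (4 * deriv a t * μ t + 4 * a t * deriv μ t) t :=
    (ha.hasDerivAt.const_mul 4).mul hμ.hasDerivAt
  have h2a : HasDerivAt (fun t => 2 * a t) (2 * deriv a t) t := ha.hasDerivAt.const_mul 2
  exact (hμ'.hasDerivAt.div h4aμ (by positivity)).sub (hd.hasDerivAt.div h2a (by positivity))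

theorem riccati_mul_eq_characteristic {K : Type*} [Field K] [CharZero K]
    (A A' B C D D' M M' M'' : K) (hA : A ≠ 0) (hM : M ≠ 0) :
    4 * A * M * ((M'' * (4 * A * M) - M' * (4 * A' * M + 4 * A * M')) / (4 * A * M) ^ 2
        - (D' * (2 * A) - D * (2 * A')) / (2 * A) ^ 2
        + B + 2 * C * (M' / (4 * A * M) - D / (2 * A))
        + 4 * A * (M' / (4 * A * M) - D / (2 * A)) ^ 2)
      = M'' - (A' / A - 2 * C + 4 * D) * M'
        + 4 * (A * B - C * D + D ^ 2 + D * A' / (2 * A) - D' / 2) * M := by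
  field_simp
  ring

theorem riccati_iff_characteristic_general
    (a b c d : ℝ → ℝ)
    (ha : Differentiable ℝ a)
    (hd : Differentiable ℝ d)
    (hane : ∀ t, a t ≠ 0)
    (μ : ℝ → ℝ) (hμ : Differentiable ℝ μ) (hμ' : Differentiable ℝ (deriv μ))
    (hμne : ∀ t, μ t ≠ 0)
    (α : ℝ → ℝ)
    (hα : ∀ t, α t = deriv μ t / (4 * a t * μ t) - d t / (2 * a t)) :
    (∀ t, deriv α t + b t + 2 * c t * α t + 4 * a t * (α t) ^ 2 = 0) ↔
    (∀ t, deriv (deriv μ) t - (deriv a t / a t - 2 * c t + 4 * d t) * deriv μ t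
        + 4 * (a t * b t - c t * d t + (d t) ^ 2 + d t * deriv a t / (2 * a t)
            - deriv d t / 2) * μ t = 0) := by
  obtain rfl : α = fun t => deriv μ t / (4 * a t * μ t) - d t / (2 * a t) := funext hα
  refine forall_congr' fun t => ?_
  have h4aμ : 4 * a t * μ t ≠ 0 := by simp [hane t, hμne t]
  rw [← mul_eq_zero_iff_left h4aμ,
    (hasDerivAt_riccati_substitution (ha t) (hd t) (hμ t) (hμ' t) (hane t) (hμne t)).deriv,
    riccati_mul_eq_characteristic _ _ _ _ _ _ _ _ _ (hane t) (hμne t)]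

/-- With `α = μ'/(4aμ) - d/(2a)`, the Riccati equation
`α' + b + 2cα + 4aα² = 0` holds if and only if `μ` satisfies the characteristic equation
`μ'' - τ(t)μ' + 4σ(t)μ = 0` with `τ = a'/a - 2c + 4d` and
`σ = ab - cd + d² + da'/(2a) - d'/2`. -/
theorem riccati_iff_characteristic
    (a b c d : ℝ → ℝ)
    (ha : Differentiable ℝ a) (hb : Differentiable ℝ b)
    (hc : Differentiable ℝ c) (hd : Differentiable ℝ d)
    (hane : ∀ t, a t ≠ 0)
    (μ : ℝ → ℝ) (hμ : Differentiable ℝ μ) (hμ' : Differentiable ℝ (deriv μ))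
    (hμne : ∀ t, μ t ≠ 0)
    (α : ℝ → ℝ)
    (hα : ∀ t, α t = deriv μ t / (4 * a t * μ t) - d t / (2 * a t)) :
    (∀ t, deriv α t + b t + 2 * c t * α t + 4 * a t * (α t) ^ 2 = 0) ↔
    (∀ t, deriv (deriv μ) t - (deriv a t / a t - 2 * c t + 4 * d t) * deriv μ t
        + 4 * (a t * b t - c t * d t + (d t) ^ 2 + d t * deriv a t / (2 * a t)
            - deriv d t / 2) * μ t = 0) :=
  riccati_iff_characteristic_general a b c d ha hd hane μ hμ hμ' hμne α hα
end

section
/- Let a, c, d : ℝ → ℝ be continuous with a(t) ≠ 0, let μ : ℝ → ℝ be positive and differentiable, define α(t) = μ'(t)/(4a(t)μ(t)) − d(t)/(2a(t)) and λ(t) = exp(−∫₀ᵗ (c(s) − 2d(s)) ds). If β : ℝ → ℝ is differentiable and satisfies β' + (c + 4aα)β = 0, then β(t) = β(0) μ(0) λ(t)/μ(t) for all t. -/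
/-! Substituting `α`, the coefficient `c + 4aα` equals `c - 2d + μ'/μ`, so `βμ` solves the linear
equation `(βμ)' = -(c - 2d) βμ`. Its integrating factor `exp (∫₀ᵗ (c - 2d)) = 1/λ` makes
`βμ/λ` constant. -/

open Real

theorem mul_exp_eq_of_hasDerivAt {f K k : ℝ → ℝ} (hK : ∀ t, HasDerivAt K (k t) t)
    (hf : ∀ t, HasDerivAt f (-(k t * f t)) t) (x y : ℝ) :
    f x * exp (K x) = f y * exp (K y) := by
  have hderiv : ∀ t, HasDerivAt (fun t => f t * exp (K t)) 0 t := fun t =>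
    ((hf t).fun_mul (hK t).exp).congr_deriv (by ring)
  exact is_const_of_deriv_eq_zero (fun t => (hderiv t).differentiableAt)
    (fun t => (hderiv t).deriv) x y

theorem eq_mul_exp_neg_integral_of_hasDerivAt {f k : ℝ → ℝ} (hk : Continuous k)
    (hf : ∀ t, HasDerivAt f (-(k t * f t)) t) (t : ℝ) :
    f t = f 0 * exp (-∫ s in (0:ℝ)..t, k s) := by
  have h := mul_exp_eq_of_hasDerivAt (fun t => (hk.integral_hasStrictDerivAt 0 t).hasDerivAt)
    hf t 0
  rw [intervalIntegral.integral_same, exp_zero, mul_one] at h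
  rw [exp_neg, ← h, mul_inv_cancel_right₀ (exp_pos _).ne']

theorem beta_formula_general
    (a c d : ℝ → ℝ) (hc : Continuous c) (hd : Continuous d)
    (hane : ∀ t, a t ≠ 0)
    (μ : ℝ → ℝ) (hμpos : ∀ t, 0 < μ t) (hμ : Differentiable ℝ μ)
    (α lam : ℝ → ℝ)
    (hα : ∀ t, α t = deriv μ t / (4 * a t * μ t) - d t / (2 * a t))
    (hlam : ∀ t, lam t = Real.exp (-∫ s in (0:ℝ)..t, (c s - 2 * d s)))
    (β : ℝ → ℝ) (hβ : Differentiable ℝ β)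
    (hode : ∀ t, deriv β t + (c t + 4 * a t * α t) * β t = 0) :
    ∀ t, β t = β 0 * μ 0 * lam t / μ t := by
  have hβμ : ∀ t, HasDerivAt (fun t => β t * μ t) (-((c t - 2 * d t) * (β t * μ t))) t := by
    intro t
    refine ((hβ t).hasDerivAt.fun_mul (hμ t).hasDerivAt).congr_deriv ?_
    have hcoeff : 4 * a t * α t = deriv μ t / μ t - 2 * d t := by
      rw [hα t]
      field_simp [hane t, (hμpos t).ne']
      ring
    rw [eq_neg_of_add_eq_zero_left (hode t), hcoeff]
    field_simp [(hμpos t).ne']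
    ring
  intro t
  rw [hlam t, ← eq_mul_exp_neg_integral_of_hasDerivAt (k := fun s => c s - 2 * d s)
    (by fun_prop) hβμ t, mul_div_cancel_right₀ _ (hμpos t).ne']

/-- If `β' + (c + 4aα)β = 0` with `α = μ'/(4aμ) - d/(2a)` and
`λ(t) = exp(-∫₀ᵗ (c - 2d))`, then `β(t) = β(0) μ(0) λ(t)/μ(t)`. -/
theorem beta_formula
    (a c d : ℝ → ℝ) (ha : Continuous a) (hc : Continuous c) (hd : Continuous d)
    (hane : ∀ t, a t ≠ 0)
    (μ : ℝ → ℝ) (hμpos : ∀ t, 0 < μ t) (hμ : Differentiable ℝ μ)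
    (α lam : ℝ → ℝ)
    (hα : ∀ t, α t = deriv μ t / (4 * a t * μ t) - d t / (2 * a t))
    (hlam : ∀ t, lam t = Real.exp (-∫ s in (0:ℝ)..t, (c s - 2 * d s)))
    (β : ℝ → ℝ) (hβ : Differentiable ℝ β)
    (hode : ∀ t, deriv β t + (c t + 4 * a t * α t) * β t = 0) :
    ∀ t, β t = β 0 * μ 0 * lam t / μ t :=
  beta_formula_general a c d hc hd hane μ hμpos hμ α lam hα hlam β hβ hode
end

section
/- Let a, b, c, d : ℝ → ℝ be continuous and let μ₀, α₀, β₀, γ₀ : I → ℝ be differentiable on an open interval I, satisfying α₀' + b + 2cα₀ + 4aα₀² = 0, β₀' + (c + 4aα₀)β₀ = 0, γ₀' + aβ₀² = 0, and μ₀' = (4aα₀ + 2d)μ₀ with μ₀ > 0 on I. Fix real constants α(0), β(0), γ(0), μ(0) and suppose α(0) + γ₀(t) ≠ 0 on I. Then the functions defined by μ(t) = 2μ(0)μ₀(t)(α(0) + γ₀(t)), α(t) = α₀(t) − β₀²(t)/(4(α(0) + γ₀(t))), β(t) = −β(0)β₀(t)/(2(α(0) + γ₀(t))), γ(t) = γ(0)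 − β²(0)/(4(α(0) + γ₀(t))) satisfy, on I: α' + b + 2cα + 4aα² = 0, β' + (c + 4aα)β = 0, γ' + aβ² = 0, and μ' = (4aα + 2d)μ. -/
/-!
The new functions are rational in the fundamental solution with denominator `κ + γ₀`, where
`κ = α(0)`. Since `γ₀' = -a β₀²`, the derivative of `1 / (κ + γ₀)` is `a β₀² / (κ + γ₀)²`; so after
the quotient rule and elimination of `α₀'`, `β₀'`, `γ₀'`, `μ₀'` through the fundamental system,
each equation becomes a rational identity that clears once multiplied by a power of `κ + γ₀`.
-/

section RiccatiTransform

variable {a b c d μ₀ α₀ β₀ γ₀ μ α β γ : ℝ → ℝ} {μ₀' α₀' β₀' γ₀' κ βc γc μc t : ℝ}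

theorem hasDerivAt_transformed_gamma (hγ₀ : HasDerivAt γ₀ γ₀' t)
    (eqC₀ : γ₀' + a t * β₀ t ^ 2 = 0) (hne : κ + γ₀ t ≠ 0)
    (hβ : ∀ s, β s = -(βc * β₀ s) / (2 * (κ + γ₀ s)))
    (hγ : ∀ s, γ s = γc - βc ^ 2 / (4 * (κ + γ₀ s))) :
    HasDerivAt γ (-(a t * β t ^ 2)) t := by
  obtain rfl : γ = _ := funext hγ
  refine ((hasDerivAt_const t γc).sub ((hasDerivAt_const t (βc ^ 2)).div
    ((hγ₀.const_add κ).const_mul 4) (by positivity))).congr_deriv ?_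
  rw [hβ, show γ₀' = -(a t * β₀ t ^ 2) by linarith]
  field_simp
  ring

theorem hasDerivAt_transformed_beta (hβ₀ : HasDerivAt β₀ β₀' t) (hγ₀ : HasDerivAt γ₀ γ₀' t)
    (eqB₀ : β₀' + (c t + 4 * a t * α₀ t) * β₀ t = 0) (eqC₀ : γ₀' + a t * β₀ t ^ 2 = 0)
    (hne : κ + γ₀ t ≠ 0)
    (hα : ∀ s, α s = α₀ s - β₀ s ^ 2 / (4 * (κ + γ₀ s)))
    (hβ : ∀ s, β s = -(βc * β₀ s) / (2 * (κ + γ₀ s))) :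
    HasDerivAt β (-((c t + 4 * a t * α t) * β t)) t := by
  obtain rfl : β = _ := funext hβ
  refine ((hβ₀.const_mul βc).fun_neg.div ((hγ₀.const_add κ).const_mul 2)
    (by positivity)).congr_deriv ?_
  rw [hα, show β₀' = -((c t + 4 * a t * α₀ t) * β₀ t) by linarith,
    show γ₀' = -(a t * β₀ t ^ 2) by linarith]
  field_simp
  ring

theorem hasDerivAt_transformed_alpha (hα₀ : HasDerivAt α₀ α₀' t) (hβ₀ : HasDerivAt β₀ β₀' t)
    (hγ₀ : HasDerivAt γ₀ γ₀' t)
    (eqA₀ : α₀' + b t + 2 * c t * α₀ t + 4 * a t * α₀ t ^ 2 = 0)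
    (eqB₀ : β₀' + (c t + 4 * a t * α₀ t) * β₀ t = 0) (eqC₀ : γ₀' + a t * β₀ t ^ 2 = 0)
    (hne : κ + γ₀ t ≠ 0) (hα : ∀ s, α s = α₀ s - β₀ s ^ 2 / (4 * (κ + γ₀ s))) :
    HasDerivAt α (-(b t + 2 * c t * α t + 4 * a t * α t ^ 2)) t := by
  obtain rfl : α = _ := funext hα
  refine (hα₀.sub ((hβ₀.fun_pow 2).div ((hγ₀.const_add κ).const_mul 4)
    (by positivity))).congr_deriv ?_
  rw [show α₀' = -(b t + 2 * c t * α₀ t + 4 * a t * α₀ t ^ 2) by linarith,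
    show β₀' = -((c t + 4 * a t * α₀ t) * β₀ t) by linarith,
    show γ₀' = -(a t * β₀ t ^ 2) by linarith]
  field_simp
  ring

theorem hasDerivAt_transformed_mu (hμ₀ : HasDerivAt μ₀ μ₀' t) (hγ₀ : HasDerivAt γ₀ γ₀' t)
    (eqM₀ : μ₀' = (4 * a t * α₀ t + 2 * d t) * μ₀ t) (eqC₀ : γ₀' + a t * β₀ t ^ 2 = 0)
    (hne : κ + γ₀ t ≠ 0)
    (hα : ∀ s, α s = α₀ s - β₀ s ^ 2 / (4 * (κ + γ₀ s)))
    (hμ : ∀ s, μ s = 2 * μc * μ₀ s * (κ + γ₀ s)) :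
    HasDerivAt μ ((4 * a t * α t + 2 * d t) * μ t) t := by
  obtain rfl : μ = _ := funext hμ
  refine ((hμ₀.const_mul (2 * μc)).mul (hγ₀.const_add κ)).congr_deriv ?_
  rw [hα, eqM₀, show γ₀' = -(a t * β₀ t ^ 2) by linarith]
  field_simp
  ring

end RiccatiTransform

theorem riccati_general_solution_mabg_general
    (a b c d : ℝ → ℝ)
    (p q : ℝ)
    (μ₀ α₀ β₀ γ₀ : ℝ → ℝ)
    (hdiff : ∀ t ∈ Set.Ioo p q, DifferentiableAt ℝ μ₀ t ∧ DifferentiableAt ℝ α₀ t ∧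
        DifferentiableAt ℝ β₀ t ∧ DifferentiableAt ℝ γ₀ t)
    (eqA₀ : ∀ t ∈ Set.Ioo p q, deriv α₀ t + b t + 2 * c t * α₀ t + 4 * a t * (α₀ t) ^ 2 = 0)
    (eqB₀ : ∀ t ∈ Set.Ioo p q, deriv β₀ t + (c t + 4 * a t * α₀ t) * β₀ t = 0)
    (eqC₀ : ∀ t ∈ Set.Ioo p q, deriv γ₀ t + a t * (β₀ t) ^ 2 = 0)
    (eqM₀ : ∀ t ∈ Set.Ioo p q, deriv μ₀ t = (4 * a t * α₀ t + 2 * d t) * μ₀ t)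
    (αc βc γc μc : ℝ)
    (hne : ∀ t ∈ Set.Ioo p q, αc + γ₀ t ≠ 0)
    (μ α β γ : ℝ → ℝ)
    (hμ : ∀ t, μ t = 2 * μc * μ₀ t * (αc + γ₀ t))
    (hα : ∀ t, α t = α₀ t - (β₀ t) ^ 2 / (4 * (αc + γ₀ t)))
    (hβ : ∀ t, β t = -(βc * β₀ t) / (2 * (αc + γ₀ t)))
    (hγ : ∀ t, γ t = γc - βc ^ 2 / (4 * (αc + γ₀ t))) :
    ∀ t ∈ Set.Ioo p q,
      deriv α t + b t + 2 * c t * α t + 4 * a t * (α t) ^ 2 = 0 ∧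
      deriv β t + (c t + 4 * a t * α t) * β t = 0 ∧
      deriv γ t + a t * (β t) ^ 2 = 0 ∧
      deriv μ t = (4 * a t * α t + 2 * d t) * μ t := by
  intro t ht
  obtain ⟨hμ₀, hα₀, hβ₀, hγ₀⟩ := hdiff t ht
  refine ⟨?_, ?_, ?_, ?_⟩
  · rw [(hasDerivAt_transformed_alpha hα₀.hasDerivAt hβ₀.hasDerivAt hγ₀.hasDerivAt
      (eqA₀ t ht) (eqB₀ t ht) (eqC₀ t ht) (hne t ht) hα).deriv]
    ring
  · rw [(hasDerivAt_transformed_beta hβ₀.hasDerivAt hγ₀.hasDerivAt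
      (eqB₀ t ht) (eqC₀ t ht) (hne t ht) hα hβ).deriv]
    ring
  · rw [(hasDerivAt_transformed_gamma hγ₀.hasDerivAt (eqC₀ t ht) (hne t ht) hβ hγ).deriv]
    ring
  · exact (hasDerivAt_transformed_mu hμ₀.hasDerivAt hγ₀.hasDerivAt
      (eqM₀ t ht) (eqC₀ t ht) (hne t ht) hα hμ).deriv

/-- Transformation formulas expressing the general solution of the
Riccati-type system (equations for μ, α, β, γ) in terms of a fundamental solution
`(μ₀, α₀, β₀, γ₀)` on an open interval `Ioo p q` and constants
`αc = α(0)`, `βc = β(0)`, `γc = γ(0)`, `μc = μ(0)`. -/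
theorem riccati_general_solution_mabg
    (a b c d : ℝ → ℝ)
    (ha : Continuous a) (hb : Continuous b) (hc : Continuous c) (hd : Continuous d)
    (p q : ℝ)
    (μ₀ α₀ β₀ γ₀ : ℝ → ℝ)
    (hdiff : ∀ t ∈ Set.Ioo p q, DifferentiableAt ℝ μ₀ t ∧ DifferentiableAt ℝ α₀ t ∧
        DifferentiableAt ℝ β₀ t ∧ DifferentiableAt ℝ γ₀ t)
    (hμ₀pos : ∀ t ∈ Set.Ioo p q, 0 < μ₀ t)
    (eqA₀ : ∀ t ∈ Set.Ioo p q, deriv α₀ t + b t + 2 * c t * α₀ t + 4 * a t * (α₀ t) ^ 2 = 0)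
    (eqB₀ : ∀ t ∈ Set.Ioo p q, deriv β₀ t + (c t + 4 * a t * α₀ t) * β₀ t = 0)
    (eqC₀ : ∀ t ∈ Set.Ioo p q, deriv γ₀ t + a t * (β₀ t) ^ 2 = 0)
    (eqM₀ : ∀ t ∈ Set.Ioo p q, deriv μ₀ t = (4 * a t * α₀ t + 2 * d t) * μ₀ t)
    (αc βc γc μc : ℝ)
    (hne : ∀ t ∈ Set.Ioo p q, αc + γ₀ t ≠ 0)
    (μ α β γ : ℝ → ℝ)
    (hμ : ∀ t, μ t = 2 * μc * μ₀ t * (αc + γ₀ t))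
    (hα : ∀ t, α t = α₀ t - (β₀ t) ^ 2 / (4 * (αc + γ₀ t)))
    (hβ : ∀ t, β t = -(βc * β₀ t) / (2 * (αc + γ₀ t)))
    (hγ : ∀ t, γ t = γc - βc ^ 2 / (4 * (αc + γ₀ t))) :
    ∀ t ∈ Set.Ioo p q,
      deriv α t + b t + 2 * c t * α t + 4 * a t * (α t) ^ 2 = 0 ∧
      deriv β t + (c t + 4 * a t * α t) * β t = 0 ∧
      deriv γ t + a t * (β t) ^ 2 = 0 ∧
      deriv μ t = (4 * a t * α t + 2 * d t) * μ t :=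
  riccati_general_solution_mabg_general a b c d p q μ₀ α₀ β₀ γ₀ hdiff eqA₀ eqB₀ eqC₀ eqM₀ αc βc γc
    μc hne μ α β γ hμ hα hβ hγ
end

section
/- Under the hypotheses of the transformation formulas for μ, α, β, γ (namely: a, b, c, d, f, g : ℝ → ℝ continuous; μ₀, α₀, β₀, γ₀, δ₀, ε₀, κ₀ : I → ℝ differentiable satisfying the full Riccati-type system α₀' + b + 2cα₀ + 4aα₀² = 0, β₀' + (c+4aα₀)β₀ = 0, γ₀' + aβ₀² = 0, δ₀' + (c+4aα₀)δ₀ = f + 2α₀g, ε₀' = (g−2aδ₀)β₀, κ₀' = gδ₀ − aδ₀²; constants α(0), β(0), δ(0), ε(0), κ(0) with α(0) + γ₀(t) ≠ 0 on I), define α(t) = α₀ − β₀²/(4(α(0)+γ₀)) and β(t) = −β(0)β₀/(2(α(0)+γ₀)). Then the functions δ(t) = δ₀(t) − β₀(t)(δ(0)+ε₀(t))/(2(α(0)+γ₀(t))), ε(t) = ε(0) − β(0)(δ(0)+ε₀(t))/(2(α(0)+γ₀(t))), κ(t) = κ(0) + κ₀(t) − (δ(0)+ε₀(t))²/(4(α(0)+γ₀(t)))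 satisfy, on I: δ' + (c + 4aα)δ = f + 2αg, ε' = (g − 2aδ)β, and κ' = gδ − aδ². -/
/-!
With `D = α(0) + γ₀` (so `D' = -a β₀²`) and `u = (δ(0) + ε₀) / (2D)`, the three functions are
`δ = δ₀ - β₀ u`, `ε = ε(0) - β(0) u` and `κ = κ(0) + κ₀ - D u²`. The whole computation rests on
the single identity `u' = β₀ (g - 2aδ) / (2D)`, expressed through the new `δ` rather than `δ₀`.
-/

section RiccatiShift

variable {a g β₀ δ₀ D u : ℝ → ℝ} {t : ℝ}

theorem hasDerivAt_riccati_quotient {w : ℝ → ℝ}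
    (hD : HasDerivAt D (-(a t * β₀ t ^ 2)) t)
    (hw : HasDerivAt w ((g t - 2 * a t * δ₀ t) * β₀ t) t) (hD₀ : D t ≠ 0) :
    HasDerivAt (fun s => w s / (2 * D s))
      (β₀ t * (g t - 2 * a t * (δ₀ t - β₀ t * (w t / (2 * D t)))) / (2 * D t)) t := by
  refine (hw.div (hD.const_mul 2) (mul_ne_zero two_ne_zero hD₀)).congr_deriv ?_
  field_simp
  ring

theorem hasDerivAt_riccati_delta {c f α₀ : ℝ → ℝ}
    (hβ₀ : HasDerivAt β₀ (-((c t + 4 * a t * α₀ t) * β₀ t)) t)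
    (hδ₀ : HasDerivAt δ₀ (f t + 2 * α₀ t * g t - (c t + 4 * a t * α₀ t) * δ₀ t) t)
    (hu : HasDerivAt u (β₀ t * (g t - 2 * a t * (δ₀ t - β₀ t * u t)) / (2 * D t)) t)
    (hD₀ : D t ≠ 0) :
    HasDerivAt (fun s => δ₀ s - β₀ s * u s)
      (f t + 2 * (α₀ t - β₀ t ^ 2 / (4 * D t)) * g t -
        (c t + 4 * a t * (α₀ t - β₀ t ^ 2 / (4 * D t))) * (δ₀ t - β₀ t * u t)) t := by
  refine (hδ₀.sub (hβ₀.mul hu)).congr_deriv ?_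
  field_simp
  ring

theorem hasDerivAt_riccati_epsilon (βc εc : ℝ)
    (hu : HasDerivAt u (β₀ t * (g t - 2 * a t * (δ₀ t - β₀ t * u t)) / (2 * D t)) t) :
    HasDerivAt (fun s => εc - βc * u s)
      ((g t - 2 * a t * (δ₀ t - β₀ t * u t)) * (-(βc * β₀ t) / (2 * D t))) t :=
  ((hu.const_mul βc).const_sub εc).congr_deriv (by ring)

theorem hasDerivAt_riccati_kappa {κ₀ : ℝ → ℝ} (κc : ℝ)
    (hD : HasDerivAt D (-(a t * β₀ t ^ 2)) t)
    (hκ₀ : HasDerivAt κ₀ (g t * δ₀ t - a t * δ₀ t ^ 2) t)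
    (hu : HasDerivAt u (β₀ t * (g t - 2 * a t * (δ₀ t - β₀ t * u t)) / (2 * D t)) t)
    (hD₀ : D t ≠ 0) :
    HasDerivAt (fun s => κc + κ₀ s - D s * u s ^ 2)
      (g t * (δ₀ t - β₀ t * u t) - a t * (δ₀ t - β₀ t * u t) ^ 2) t := by
  refine ((hκ₀.const_add κc).sub (hD.mul (hu.pow 2))).congr_deriv ?_
  simp only [Pi.pow_apply]
  field_simp
  ring

end RiccatiShift

theorem div_four_mul_eq_mul_div_two_mul_sq (w D : ℝ) : w ^ 2 / (4 * D) = D * (w / (2 * D)) ^ 2 := by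
  rcases eq_or_ne D 0 with rfl | hD
  · simp
  · field_simp
    ring

theorem riccati_general_solution_dek_general
    (a c f g : ℝ → ℝ)
    (p q : ℝ)
    (μ₀ α₀ β₀ γ₀ δ₀ ε₀ κ₀ : ℝ → ℝ)
    (hdiff : ∀ t ∈ Set.Ioo p q, DifferentiableAt ℝ μ₀ t ∧ DifferentiableAt ℝ α₀ t ∧
        DifferentiableAt ℝ β₀ t ∧ DifferentiableAt ℝ γ₀ t ∧ DifferentiableAt ℝ δ₀ t ∧
        DifferentiableAt ℝ ε₀ t ∧ DifferentiableAt ℝ κ₀ t)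
    (eqB₀ : ∀ t ∈ Set.Ioo p q, deriv β₀ t + (c t + 4 * a t * α₀ t) * β₀ t = 0)
    (eqC₀ : ∀ t ∈ Set.Ioo p q, deriv γ₀ t + a t * (β₀ t) ^ 2 = 0)
    (eqD₀ : ∀ t ∈ Set.Ioo p q, deriv δ₀ t + (c t + 4 * a t * α₀ t) * δ₀ t = f t + 2 * α₀ t * g t)
    (eqE₀ : ∀ t ∈ Set.Ioo p q, deriv ε₀ t = (g t - 2 * a t * δ₀ t) * β₀ t)
    (eqF₀ : ∀ t ∈ Set.Ioo p q, deriv κ₀ t = g t * δ₀ t - a t * (δ₀ t) ^ 2)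
    (αc βc δc εc κc : ℝ)
    (hne : ∀ t ∈ Set.Ioo p q, αc + γ₀ t ≠ 0)
    (α β δ ε κ : ℝ → ℝ)
    (hα : ∀ t, α t = α₀ t - (β₀ t) ^ 2 / (4 * (αc + γ₀ t)))
    (hβ : ∀ t, β t = -(βc * β₀ t) / (2 * (αc + γ₀ t)))
    (hδ : ∀ t, δ t = δ₀ t - β₀ t * (δc + ε₀ t) / (2 * (αc + γ₀ t)))
    (hε : ∀ t, ε t = εc - βc * (δc + ε₀ t) / (2 * (αc + γ₀ t)))
    (hκ : ∀ t, κ t = κc + κ₀ t - (δc + ε₀ t) ^ 2 / (4 * (αc + γ₀ t))) :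
    ∀ t ∈ Set.Ioo p q,
      deriv δ t + (c t + 4 * a t * α t) * δ t = f t + 2 * α t * g t ∧
      deriv ε t = (g t - 2 * a t * δ t) * β t ∧
      deriv κ t = g t * δ t - a t * (δ t) ^ 2 := by
  intro t ht
  obtain ⟨-, -, hβ₀, hγ₀, hδ₀, hε₀, hκ₀⟩ := hdiff t ht
  set D := fun s => αc + γ₀ s
  set u := fun s => (δc + ε₀ s) / (2 * D s)
  have hD : HasDerivAt D (-(a t * β₀ t ^ 2)) t :=
    (hγ₀.hasDerivAt.const_add αc).congr_deriv (by linarith [eqC₀ t ht])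
  have hu : HasDerivAt u _ t := hasDerivAt_riccati_quotient (g := g) (δ₀ := δ₀) hD
    ((hε₀.hasDerivAt.const_add δc).congr_deriv (eqE₀ t ht)) (hne t ht)
  have hδu : δ = fun s => δ₀ s - β₀ s * u s := funext fun s => by simp [u, D, hδ, mul_div_assoc]
  have hεu : ε = fun s => εc - βc * u s := funext fun s => by simp [u, D, hε, mul_div_assoc]
  have hκu : κ = fun s => κc + κ₀ s - D s * u s ^ 2 :=
    funext fun s => by simp only [u, D, hκ, div_four_mul_eq_mul_div_two_mul_sq]
  have hδt : δ t = δ₀ t - β₀ t * u t := by rw [hδu]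
  have hβ₀' : HasDerivAt β₀ (-((c t + 4 * a t * α₀ t) * β₀ t)) t :=
    hβ₀.hasDerivAt.congr_deriv (by linarith [eqB₀ t ht])
  have hδ₀' : HasDerivAt δ₀ (f t + 2 * α₀ t * g t - (c t + 4 * a t * α₀ t) * δ₀ t) t :=
    hδ₀.hasDerivAt.congr_deriv (by linarith [eqD₀ t ht])
  refine ⟨?_, ?_, ?_⟩
  · rw [hδu, (hasDerivAt_riccati_delta hβ₀' hδ₀' hu (hne t ht)).deriv, ← hα t]
    ring
  · rw [hεu, (hasDerivAt_riccati_epsilon βc εc hu).deriv, hβ t, hδt]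
  · rw [hκu, (hasDerivAt_riccati_kappa κc hD (hκ₀.hasDerivAt.congr_deriv (eqF₀ t ht)) hu
      (hne t ht)).deriv, hδt]

/-- Transformation formulas expressing the general solution of the
Riccati-type system (equations for δ, ε, κ) in terms of a fundamental solution
`(μ₀, α₀, β₀, γ₀, δ₀, ε₀, κ₀)` on an open interval `Ioo p q` and constants
`αc = α(0)`, `βc = β(0)`, `δc = δ(0)`, `εc = ε(0)`, `κc = κ(0)`. -/
theorem riccati_general_solution_dek
    (a b c d f g : ℝ → ℝ)
    (ha : Continuous a) (hb : Continuous b) (hc : Continuous c)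
    (hd : Continuous d) (hf : Continuous f) (hg : Continuous g)
    (p q : ℝ)
    (μ₀ α₀ β₀ γ₀ δ₀ ε₀ κ₀ : ℝ → ℝ)
    (hdiff : ∀ t ∈ Set.Ioo p q, DifferentiableAt ℝ μ₀ t ∧ DifferentiableAt ℝ α₀ t ∧
        DifferentiableAt ℝ β₀ t ∧ DifferentiableAt ℝ γ₀ t ∧ DifferentiableAt ℝ δ₀ t ∧
        DifferentiableAt ℝ ε₀ t ∧ DifferentiableAt ℝ κ₀ t)
    (eqA₀ : ∀ t ∈ Set.Ioo p q, deriv α₀ t + b t + 2 * c t * α₀ t + 4 * a t * (α₀ t) ^ 2 = 0)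
    (eqB₀ : ∀ t ∈ Set.Ioo p q, deriv β₀ t + (c t + 4 * a t * α₀ t) * β₀ t = 0)
    (eqC₀ : ∀ t ∈ Set.Ioo p q, deriv γ₀ t + a t * (β₀ t) ^ 2 = 0)
    (eqD₀ : ∀ t ∈ Set.Ioo p q, deriv δ₀ t + (c t + 4 * a t * α₀ t) * δ₀ t = f t + 2 * α₀ t * g t)
    (eqE₀ : ∀ t ∈ Set.Ioo p q, deriv ε₀ t = (g t - 2 * a t * δ₀ t) * β₀ t)
    (eqF₀ : ∀ t ∈ Set.Ioo p q, deriv κ₀ t = g t * δ₀ t - a t * (δ₀ t) ^ 2)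
    (αc βc δc εc κc : ℝ)
    (hne : ∀ t ∈ Set.Ioo p q, αc + γ₀ t ≠ 0)
    (α β δ ε κ : ℝ → ℝ)
    (hα : ∀ t, α t = α₀ t - (β₀ t) ^ 2 / (4 * (αc + γ₀ t)))
    (hβ : ∀ t, β t = -(βc * β₀ t) / (2 * (αc + γ₀ t)))
    (hδ : ∀ t, δ t = δ₀ t - β₀ t * (δc + ε₀ t) / (2 * (αc + γ₀ t)))
    (hε : ∀ t, ε t = εc - βc * (δc + ε₀ t) / (2 * (αc + γ₀ t)))
    (hκ : ∀ t, κ t = κc + κ₀ t - (δc + ε₀ t) ^ 2 / (4 * (αc + γ₀ t))) :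
    ∀ t ∈ Set.Ioo p q,
      deriv δ t + (c t + 4 * a t * α t) * δ t = f t + 2 * α t * g t ∧
      deriv ε t = (g t - 2 * a t * δ t) * β t ∧
      deriv κ t = g t * δ t - a t * (δ t) ^ 2 :=
  riccati_general_solution_dek_general a c f g p q μ₀ α₀ β₀ γ₀ δ₀ ε₀ κ₀ hdiff eqB₀ eqC₀ eqD₀ eqE₀
    eqF₀ αc βc δc εc κc hne α β δ ε κ hα hβ hδ hε hκ
end

section
/- Let a, b, c, d : ℝ → ℝ be differentiable with a(t) ≠ 0, and set τ(t) = a'/a − 2c + 4d and σ(t) = ab − cd + d² + (d a')/(2a) − d'/2, and λ(t) = exp(−∫₀ᵗ (c(s) − 2d(s)) ds). Let μ₀, μ₁ be twice-differentiable solutions of the characteristic equation μ'' − τ(t)μ' + 4σ(t)μ = 0 with initial data μ₀(0) = 0, μ₀'(0) = 2a(0) ≠ 0 and μ₁(0) ≠ 0, μ₁'(0) = 0, and suppose μ₀(t) ≠ 0 on an interval (0, T). Then on (0, T) the functions α₀(t) = μ₀'/(4aμ₀) − d/(2a), β₀(t) = −λ(t)/μ₀(t), γ₀(t) = μ₁(t)/(2μ₁(0)μ₀(t))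 + d(0)/(2a(0)) satisfy α₀' + b + 2cα₀ + 4aα₀² = 0, β₀' + (c + 4aα₀)β₀ = 0, and γ₀' + aβ₀² = 0. -/
/-!
Only the γ-equation needs more than differentiating and clearing denominators.
The Wronskian `W = μ₀ μ₁' - μ₀' μ₁` of two solutions of `μ'' - τ μ' + 4σ μ = 0` satisfies
`W' = τ W`, and so does `a λ²`, because `λ' = -(c - 2d) λ` and `τ = a'/a - 2(c - 2d)`.
Hence `W = -2 μ₁(0) a λ²` (Abel's identity), and this is exactly what
`γ₀' = W / (2 μ₁(0) μ₀²)` has to equal for `γ₀' = -a β₀²`.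
-/

theorem hasDerivAt_exp_neg_integral {f : ℝ → ℝ} (hf : Continuous f) (t : ℝ) :
    HasDerivAt (fun u => Real.exp (-∫ s in (0:ℝ)..u, f s))
      (-f t * Real.exp (-∫ s in (0:ℝ)..t, f s)) t := by
  have hI : HasDerivAt (fun u => ∫ s in (0:ℝ)..u, f s) (f t) t :=
    intervalIntegral.integral_hasDerivAt_right (hf.intervalIntegrable _ _)
      (hf.stronglyMeasurableAtFilter _ _) hf.continuousAt
  simpa [mul_comm] using hI.neg.exp

theorem eq_div_mul_of_hasDerivAt_eq_mul {W D τ : ℝ → ℝ}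
    (hW : ∀ t, HasDerivAt W (τ t * W t) t) (hD : ∀ t, HasDerivAt D (τ t * D t) t)
    (hD0 : ∀ t, D t ≠ 0) (t : ℝ) :
    W t = W 0 / D 0 * D t := by
  have hquot : ∀ u, HasDerivAt (fun v => W v / D v) 0 u := fun u =>
    ((hW u).div (hD u) (hD0 u)).congr_deriv (by ring)
  have hconst := is_const_of_deriv_eq_zero (fun u => (hquot u).differentiableAt)
    (fun u => (hquot u).deriv) t 0
  rw [← hconst, div_mul_cancel₀ _ (hD0 t)]

theorem hasDerivAt_wronskian {μ ν τ q : ℝ → ℝ} {t : ℝ}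
    (hμ : DifferentiableAt ℝ μ t) (hμ' : DifferentiableAt ℝ (deriv μ) t)
    (hν : DifferentiableAt ℝ ν t) (hν' : DifferentiableAt ℝ (deriv ν) t)
    (hodeμ : deriv (deriv μ) t - τ t * deriv μ t + q t * μ t = 0)
    (hodeν : deriv (deriv ν) t - τ t * deriv ν t + q t * ν t = 0) :
    HasDerivAt (fun u => μ u * deriv ν u - deriv μ u * ν u)
      (τ t * (μ t * deriv ν t - deriv μ t * ν t)) t :=
  (hμ.hasDerivAt.mul hν'.hasDerivAt).sub (hμ'.hasDerivAt.mul hν.hasDerivAt) |>.congr_deriv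
    (by linear_combination μ t * hodeν - ν t * hodeμ)

theorem hasDerivAt_mul_sq_of_hasDerivAt_neg_mul {a lam e : ℝ → ℝ} {t : ℝ}
    (ha : DifferentiableAt ℝ a t) (hat : a t ≠ 0)
    (hlam : HasDerivAt lam (-e t * lam t) t) :
    HasDerivAt (fun u => a u * lam u ^ 2)
      ((deriv a t / a t - 2 * e t) * (a t * lam t ^ 2)) t :=
  (ha.hasDerivAt.mul (hlam.pow 2)).congr_deriv (by simp only [Pi.pow_apply]; field_simp; ring)

section Riccati

variable {a b c d μ lam τ σ α : ℝ → ℝ} {t : ℝ}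

theorem riccati_of_characteristic
    (ha : DifferentiableAt ℝ a t) (hd : DifferentiableAt ℝ d t)
    (hμ : DifferentiableAt ℝ μ t) (hμ' : DifferentiableAt ℝ (deriv μ) t)
    (hat : a t ≠ 0) (hμt : μ t ≠ 0)
    (hτ : τ t = deriv a t / a t - 2 * c t + 4 * d t)
    (hσ : σ t = a t * b t - c t * d t + (d t) ^ 2 + d t * deriv a t / (2 * a t)
        - deriv d t / 2)
    (hode : deriv (deriv μ) t - τ t * deriv μ t + 4 * σ t * μ t = 0)
    (hα : α = fun u => deriv μ u / (4 * a u * μ u) - d u / (2 * a u)) :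
    deriv α t + b t + 2 * c t * α t + 4 * a t * (α t) ^ 2 = 0 := by
  have hαd : HasDerivAt α
      ((deriv (deriv μ) t * (4 * a t * μ t)
          - deriv μ t * (4 * deriv a t * μ t + 4 * a t * deriv μ t)) / (4 * a t * μ t) ^ 2
        - (deriv d t * (2 * a t) - d t * (2 * deriv a t)) / (2 * a t) ^ 2) t := by
    rw [hα]
    refine (hμ'.hasDerivAt.div ?_ (by positivity)).sub
      (hd.hasDerivAt.div ((ha.hasDerivAt.const_mul 2).congr_deriv (by ring)) (by positivity))
    exact ((ha.hasDerivAt.const_mul 4).mul hμ.hasDerivAt).congr_deriv (by ring)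
  have hμ'' : deriv (deriv μ) t = τ t * deriv μ t - 4 * σ t * μ t := by
    linear_combination hode
  rw [hαd.deriv, hα, hμ'', hτ, hσ]
  field_simp
  ring

theorem beta_equation_of_alpha {β : ℝ → ℝ} (hμ : DifferentiableAt ℝ μ t) (hat : a t ≠ 0)
    (hμt : μ t ≠ 0) (hlam : HasDerivAt lam (-(c t - 2 * d t) * lam t) t)
    (hα : α t = deriv μ t / (4 * a t * μ t) - d t / (2 * a t))
    (hβ : β = fun u => -(lam u / μ u)) :
    deriv β t + (c t + 4 * a t * α t) * β t = 0 := by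
  have hβd : HasDerivAt β
      (-((-(c t - 2 * d t) * lam t * μ t - lam t * deriv μ t) / μ t ^ 2)) t :=
    hβ ▸ (hlam.div hμ.hasDerivAt hμt).neg
  rw [hβd.deriv, hβ, hα]
  field_simp
  ring

theorem gamma_equation_of_wronskian {β γ ν : ℝ → ℝ} {k C : ℝ} (hμ : DifferentiableAt ℝ μ t)
    (hν : DifferentiableAt ℝ ν t) (hk : k ≠ 0) (hμt : μ t ≠ 0)
    (hW : μ t * deriv ν t - deriv μ t * ν t = -2 * k * (a t * lam t ^ 2))
    (hβ : β = fun u => -(lam u / μ u)) (hγ : γ = fun u => ν u / (2 * k * μ u) + C) :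
    deriv γ t + a t * (β t) ^ 2 = 0 := by
  have hden : 2 * k * μ t ≠ 0 := by positivity
  have hγd : HasDerivAt γ
      ((deriv ν t * (2 * k * μ t) - ν t * (2 * k * deriv μ t)) / (2 * k * μ t) ^ 2) t :=
    hγ ▸ (hν.hasDerivAt.div (hμ.hasDerivAt.const_mul (2 * k)) hden).add_const C
  have hnum : deriv ν t * (2 * k * μ t) - ν t * (2 * k * deriv μ t)
      = 2 * k * (-2 * k * (a t * lam t ^ 2)) := by
    rw [← hW]; ring
  rw [hγd.deriv, hnum, hβ]
  field_simp
  ring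

end Riccati

theorem fundamental_solution_abg_general
    (a b c d : ℝ → ℝ)
    (ha : Differentiable ℝ a)
    (hc : Differentiable ℝ c) (hd : Differentiable ℝ d)
    (hane : ∀ t, a t ≠ 0)
    (T : ℝ)
    (τ σ lam : ℝ → ℝ)
    (hτ : ∀ t, τ t = deriv a t / a t - 2 * c t + 4 * d t)
    (hσ : ∀ t, σ t = a t * b t - c t * d t + (d t) ^ 2 + d t * deriv a t / (2 * a t)
        - deriv d t / 2)
    (hlam : ∀ t, lam t = Real.exp (-∫ s in (0:ℝ)..t, (c s - 2 * d s)))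
    (μ₀ μ₁ : ℝ → ℝ)
    (hμ₀ : Differentiable ℝ μ₀) (hμ₀' : Differentiable ℝ (deriv μ₀))
    (hμ₁ : Differentiable ℝ μ₁) (hμ₁' : Differentiable ℝ (deriv μ₁))
    (hode₀ : ∀ t, deriv (deriv μ₀) t - τ t * deriv μ₀ t + 4 * σ t * μ₀ t = 0)
    (hode₁ : ∀ t, deriv (deriv μ₁) t - τ t * deriv μ₁ t + 4 * σ t * μ₁ t = 0)
    (h₀0 : μ₀ 0 = 0) (h₀0' : deriv μ₀ 0 = 2 * a 0)
    (h₁0 : μ₁ 0 ≠ 0) (h₁0' : deriv μ₁ 0 = 0)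
    (hμ₀ne : ∀ t ∈ Set.Ioo (0:ℝ) T, μ₀ t ≠ 0)
    (α₀ β₀ γ₀ : ℝ → ℝ)
    (hα₀ : ∀ t, α₀ t = deriv μ₀ t / (4 * a t * μ₀ t) - d t / (2 * a t))
    (hβ₀ : ∀ t, β₀ t = -(lam t / μ₀ t))
    (hγ₀ : ∀ t, γ₀ t = μ₁ t / (2 * μ₁ 0 * μ₀ t) + d 0 / (2 * a 0)) :
    ∀ t ∈ Set.Ioo (0:ℝ) T,
      deriv α₀ t + b t + 2 * c t * α₀ t + 4 * a t * (α₀ t) ^ 2 = 0 ∧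
      deriv β₀ t + (c t + 4 * a t * α₀ t) * β₀ t = 0 ∧
      deriv γ₀ t + a t * (β₀ t) ^ 2 = 0 := by
  have hlamd : ∀ u, HasDerivAt lam (-(c u - 2 * d u) * lam u) u := fun u => by
    rw [funext hlam]
    exact hasDerivAt_exp_neg_integral (f := fun s => c s - 2 * d s)
      (hc.continuous.sub (hd.continuous.const_mul 2)) u
  have hW : ∀ u, HasDerivAt (fun v => μ₀ v * deriv μ₁ v - deriv μ₀ v * μ₁ v)
      (τ u * (μ₀ u * deriv μ₁ u - deriv μ₀ u * μ₁ u)) u := fun u =>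
    hasDerivAt_wronskian (q := fun v => 4 * σ v) (hμ₀ u) (hμ₀' u) (hμ₁ u) (hμ₁' u)
      (hode₀ u) (hode₁ u)
  have hD : ∀ u, HasDerivAt (fun v => a v * lam v ^ 2) (τ u * (a u * lam u ^ 2)) u := fun u =>
    (hasDerivAt_mul_sq_of_hasDerivAt_neg_mul (e := fun s => c s - 2 * d s) (ha u) (hane u)
      (hlamd u)).congr_deriv (by rw [hτ]; ring)
  have hD0 : ∀ u, a u * lam u ^ 2 ≠ 0 := fun u => by
    rw [hlam]; exact mul_ne_zero (hane u) (by positivity)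
  have hwronskian : ∀ u, μ₀ u * deriv μ₁ u - deriv μ₀ u * μ₁ u
      = -2 * μ₁ 0 * (a u * lam u ^ 2) := fun u => by
    rw [eq_div_mul_of_hasDerivAt_eq_mul hW hD hD0 u, h₀0, h₀0', h₁0', hlam 0]
    simp only [intervalIntegral.integral_same, neg_zero, Real.exp_zero]
    field_simp [hane 0]
    ring
  intro t ht
  exact ⟨riccati_of_characteristic (ha t) (hd t) (hμ₀ t) (hμ₀' t) (hane t) (hμ₀ne t ht)
      (hτ t) (hσ t) (hode₀ t) (funext hα₀),
    beta_equation_of_alpha (hμ₀ t) (hane t) (hμ₀ne t ht) (hlamd t) (hα₀ t) (funext hβ₀),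
    gamma_equation_of_wronskian (hμ₀ t) (hμ₁ t) h₁0 (hμ₀ne t ht) (hwronskian t) (funext hβ₀)
      (funext hγ₀)⟩

/-- The fundamental solution `(α₀, β₀, γ₀)` of the Riccati-type system,
built from the standard solutions `μ₀, μ₁` of the characteristic equation
`μ'' - τ(t)μ' + 4σ(t)μ = 0`. -/
theorem fundamental_solution_abg
    (a b c d : ℝ → ℝ)
    (ha : Differentiable ℝ a) (hb : Differentiable ℝ b)
    (hc : Differentiable ℝ c) (hd : Differentiable ℝ d)
    (hane : ∀ t, a t ≠ 0)
    (T : ℝ)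
    (τ σ lam : ℝ → ℝ)
    (hτ : ∀ t, τ t = deriv a t / a t - 2 * c t + 4 * d t)
    (hσ : ∀ t, σ t = a t * b t - c t * d t + (d t) ^ 2 + d t * deriv a t / (2 * a t)
        - deriv d t / 2)
    (hlam : ∀ t, lam t = Real.exp (-∫ s in (0:ℝ)..t, (c s - 2 * d s)))
    (μ₀ μ₁ : ℝ → ℝ)
    (hμ₀ : Differentiable ℝ μ₀) (hμ₀' : Differentiable ℝ (deriv μ₀))
    (hμ₁ : Differentiable ℝ μ₁) (hμ₁' : Differentiable ℝ (deriv μ₁))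
    (hode₀ : ∀ t, deriv (deriv μ₀) t - τ t * deriv μ₀ t + 4 * σ t * μ₀ t = 0)
    (hode₁ : ∀ t, deriv (deriv μ₁) t - τ t * deriv μ₁ t + 4 * σ t * μ₁ t = 0)
    (h₀0 : μ₀ 0 = 0) (h₀0' : deriv μ₀ 0 = 2 * a 0)
    (h₁0 : μ₁ 0 ≠ 0) (h₁0' : deriv μ₁ 0 = 0)
    (hμ₀ne : ∀ t ∈ Set.Ioo (0:ℝ) T, μ₀ t ≠ 0)
    (α₀ β₀ γ₀ : ℝ → ℝ)
    (hα₀ : ∀ t, α₀ t = deriv μ₀ t / (4 * a t * μ₀ t) - d t / (2 * a t))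
    (hβ₀ : ∀ t, β₀ t = -(lam t / μ₀ t))
    (hγ₀ : ∀ t, γ₀ t = μ₁ t / (2 * μ₁ 0 * μ₀ t) + d 0 / (2 * a 0)) :
    ∀ t ∈ Set.Ioo (0:ℝ) T,
      deriv α₀ t + b t + 2 * c t * α₀ t + 4 * a t * (α₀ t) ^ 2 = 0 ∧
      deriv β₀ t + (c t + 4 * a t * α₀ t) * β₀ t = 0 ∧
      deriv γ₀ t + a t * (β₀ t) ^ 2 = 0 :=
  fundamental_solution_abg_general a b c d ha hc hd hane T τ σ lam hτ hσ hlam μ₀ μ₁ hμ₀ hμ₀' hμ₁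
    hμ₁' hode₀ hode₁ h₀0 h₀0' h₁0 h₁0' hμ₀ne α₀ β₀ γ₀ hα₀ hβ₀ hγ₀
end

section
/- Let a, b, c, d, f, g : ℝ → ℝ be continuous and suppose μ₀, α₀, β₀, γ₀, δ₀, ε₀, κ₀ : I → ℝ are differentiable on an interval I with μ₀ > 0, satisfying α₀' + b + 2cα₀ + 4aα₀² = 0, β₀' + (c+4aα₀)β₀ = 0, γ₀' + aβ₀² = 0, δ₀' + (c+4aα₀)δ₀ = f + 2α₀g, ε₀' = (g − 2aδ₀)β₀, κ₀' = gδ₀ − aδ₀², and μ₀' = (4aα₀ + 2d)μ₀. Then for each fixed y ∈ ℝ, the function G(x, t) = (2πiμ₀(t))^{−1/2} exp[ i(α₀(t)x² + β₀(t)xy + γ₀(t)y² + δ₀(t)x + ε₀(t)y + κ₀(t)) ] satisfies the linear Schrödinger equation iG_t = −a(t)G_xx + b(t)x²G − ic(t)xG_x − id(t)G − f(t)xG + ig(t)G_x on ℝ × I. -/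
/-!
Write `G = A(t) e^{i S(x,t)}` with amplitude `A = (2πiμ₀)^{-1/2}` and real quadratic phase `S`.
Then `G_x = i S_x G`, `G_xx = (i S_xx - S_x²) G` and `G_t = (A'/A + i S_t) G`, so the Schrödinger
equation splits into an imaginary part, the transport equation `A'/A = -(a S_xx + d)`, which is the
equation for `μ₀` since `A'/A = -μ₀'/(2μ₀)`, and a real part, the Hamilton–Jacobi equation
`S_t + a S_x² + b x² + c x S_x - f x - g S_x = 0`. For the quadratic phase the coefficients of
`x², xy, y², x, y, 1` in the latter are exactly the Riccati-type equations for `α₀, …, κ₀`.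
-/

open Complex Real

theorem HasDerivAt.cpow_const_mul_self {F : ℝ → ℂ} {F' : ℂ} {t : ℝ} {r : ℂ}
    (hF : HasDerivAt F F' t) (hslit : F t ∈ slitPlane) :
    HasDerivAt (fun s => F s ^ r) (r * F' / F t * F t ^ r) t := by
  refine ((hasStrictDerivAt_cpow_const hslit).hasDerivAt.comp t hF).congr_deriv ?_
  rw [cpow_sub _ _ (slitPlane_ne_zero hslit), cpow_one]
  ring

theorem HasDerivAt.cexp_I_mul_ofReal {S : ℝ → ℝ} {S' x : ℝ} (hS : HasDerivAt S S' x) :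
    HasDerivAt (fun x => cexp (I * S x)) (I * S' * cexp (I * S x)) x :=
  (hS.ofReal_comp.const_mul I).cexp.congr_deriv (mul_comm _ _)

theorem hasDerivAt_cpow_neg_half_two_pi_I_mul {μ : ℝ → ℝ} {μ' t : ℝ} (hμ : HasDerivAt μ μ' t)
    (hμ0 : μ t ≠ 0) :
    HasDerivAt (fun s => (2 * π * I * μ s) ^ (-(1 / 2) : ℂ))
      (-(μ' / (2 * μ t)) * (2 * π * I * μ t) ^ (-(1 / 2) : ℂ)) t := by
  have hslit : 2 * π * I * μ t ∈ slitPlane := by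
    rw [mem_slitPlane_iff]
    right
    simp [pi_ne_zero, hμ0]
  refine ((hμ.ofReal_comp.const_mul (2 * π * I)).cpow_const_mul_self hslit).congr_deriv ?_
  have hπ : (π : ℂ) ≠ 0 := ofReal_ne_zero.mpr pi_ne_zero
  field_simp

theorem schrodinger_of_amplitude_phase {A : ℝ → ℂ} {S : ℝ → ℝ → ℝ} {Sx : ℝ → ℝ} {A' : ℂ}
    {St Sxx a b c d f g x t : ℝ} {G : ℝ → ℝ → ℂ} (hG : ∀ x t, G x t = A t * cexp (I * S x t))
    (hA : HasDerivAt A A' t) (hSt : HasDerivAt (S x) St t)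
    (hSx : ∀ u, HasDerivAt (fun v => S v t) (Sx u) u) (hSxx : HasDerivAt Sx Sxx x)
    (hamplitude : A' = -(a * Sxx + d) * A t)
    (hphase : St + a * Sx x ^ 2 + b * x ^ 2 + c * x * Sx x - f * x - g * Sx x = 0) :
    I * deriv (fun s => G x s) t
      = -(a : ℂ) * deriv (fun u => deriv (fun v => G v t) u) x
        + (b : ℂ) * (x : ℂ) ^ 2 * G x t
        - I * (c : ℂ) * (x : ℂ) * deriv (fun u => G u t) x
        - I * (d : ℂ) * G x t
        - (f : ℂ) * (x : ℂ) * G x t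
        + I * (g : ℂ) * deriv (fun u => G u t) x := by
  have hGx (u : ℝ) : HasDerivAt (fun v => G v t) (I * Sx u * G u t) u := by
    simp only [hG]
    exact ((hSx u).cexp_I_mul_ofReal.const_mul (A t)).congr_deriv (by ring)
  have hGxx : HasDerivAt (fun u => I * Sx u * G u t)
      (I * Sxx * G x t + I * Sx x * (I * Sx x * G x t)) x :=
    (hSxx.ofReal_comp.const_mul I).mul (hGx x)
  have hGt : HasDerivAt (fun s => G x s) ((A' + I * St * A t) * cexp (I * S x t)) t := by
    simp only [hG]
    exact (hA.mul hSt.cexp_I_mul_ofReal).congr_deriv (by ring)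
  have hphaseC : (St : ℂ) = -(a * Sx x ^ 2 + b * x ^ 2 + c * x * Sx x - f * x - g * Sx x) := by
    exact_mod_cast eq_neg_of_add_eq_zero_left (by linarith : St + _ = 0)
  rw [hGt.deriv, (hGx x).deriv, funext fun u => (hGx u).deriv, hGxx.deriv, hG, hamplitude,
    hphaseC]
  linear_combination (A t * (f * x - b * x ^ 2) * cexp (I * S x t)) * I_sq

def greenPhase (α β γ δ ε κ : ℝ → ℝ) (y x t : ℝ) : ℝ :=
  α t * x ^ 2 + β t * x * y + γ t * y ^ 2 + δ t * x + ε t * y + κ t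

theorem hasDerivAt_greenPhase_space (α β γ δ ε κ : ℝ → ℝ) (y t u : ℝ) :
    HasDerivAt (fun v => greenPhase α β γ δ ε κ y v t) (2 * α t * u + β t * y + δ t) u := by
  have h := (((hasDerivAt_pow 2 u).const_mul (α t)).add
    ((hasDerivAt_id u).const_mul (β t * y + δ t))).add_const (γ t * y ^ 2 + ε t * y + κ t)
  have hpoly : (fun v => greenPhase α β γ δ ε κ y v t)
      = fun v => α t * v ^ 2 + (β t * y + δ t) * v + (γ t * y ^ 2 + ε t * y + κ t) := by
    funext v
    simp only [greenPhase]
    ring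
  rw [hpoly]
  exact h.congr_deriv (by simp only [mul_one]; ring)

theorem hasDerivAt_greenPhase_time {α β γ δ ε κ : ℝ → ℝ} {α' β' γ' δ' ε' κ' : ℝ} {t : ℝ}
    (hα : HasDerivAt α α' t) (hβ : HasDerivAt β β' t) (hγ : HasDerivAt γ γ' t)
    (hδ : HasDerivAt δ δ' t) (hε : HasDerivAt ε ε' t) (hκ : HasDerivAt κ κ' t) (x y : ℝ) :
    HasDerivAt (greenPhase α β γ δ ε κ y x)
      (α' * x ^ 2 + β' * x * y + γ' * y ^ 2 + δ' * x + ε' * y + κ') t :=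
  ((((((hα.mul_const _).add ((hβ.mul_const x).mul_const y)).add (hγ.mul_const _)).add
    (hδ.mul_const x)).add (hε.mul_const y)).add hκ)

theorem hamiltonJacobi_of_riccati {a b c f g α β δ α' β' γ' δ' ε' κ' : ℝ}
    (hα : α' + b + 2 * c * α + 4 * a * α ^ 2 = 0) (hβ : β' + (c + 4 * a * α) * β = 0)
    (hγ : γ' + a * β ^ 2 = 0) (hδ : δ' + (c + 4 * a * α) * δ = f + 2 * α * g)
    (hε : ε' = (g - 2 * a * δ) * β) (hκ : κ' = g * δ - a * δ ^ 2) (x y : ℝ) :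
    (α' * x ^ 2 + β' * x * y + γ' * y ^ 2 + δ' * x + ε' * y + κ')
      + a * (2 * α * x + β * y + δ) ^ 2 + b * x ^ 2 + c * x * (2 * α * x + β * y + δ)
      - f * x - g * (2 * α * x + β * y + δ) = 0 := by
  linear_combination x ^ 2 * hα + x * y * hβ + y ^ 2 * hγ + x * hδ + y * hε + hκ

theorem green_function_solves_linear_schrodinger_general
    (a b c d f g : ℝ → ℝ)
    (p q : ℝ)
    (μ₀ α₀ β₀ γ₀ δ₀ ε₀ κ₀ : ℝ → ℝ)
    (hdiff : ∀ t ∈ Set.Ioo p q, DifferentiableAt ℝ μ₀ t ∧ DifferentiableAt ℝ α₀ t ∧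
        DifferentiableAt ℝ β₀ t ∧ DifferentiableAt ℝ γ₀ t ∧ DifferentiableAt ℝ δ₀ t ∧
        DifferentiableAt ℝ ε₀ t ∧ DifferentiableAt ℝ κ₀ t)
    (hμ₀pos : ∀ t ∈ Set.Ioo p q, 0 < μ₀ t)
    (eqA₀ : ∀ t ∈ Set.Ioo p q, deriv α₀ t + b t + 2 * c t * α₀ t + 4 * a t * (α₀ t) ^ 2 = 0)
    (eqB₀ : ∀ t ∈ Set.Ioo p q, deriv β₀ t + (c t + 4 * a t * α₀ t) * β₀ t = 0)
    (eqC₀ : ∀ t ∈ Set.Ioo p q, deriv γ₀ t + a t * (β₀ t) ^ 2 = 0)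
    (eqD₀ : ∀ t ∈ Set.Ioo p q, deriv δ₀ t + (c t + 4 * a t * α₀ t) * δ₀ t = f t + 2 * α₀ t * g t)
    (eqE₀ : ∀ t ∈ Set.Ioo p q, deriv ε₀ t = (g t - 2 * a t * δ₀ t) * β₀ t)
    (eqF₀ : ∀ t ∈ Set.Ioo p q, deriv κ₀ t = g t * δ₀ t - a t * (δ₀ t) ^ 2)
    (eqM₀ : ∀ t ∈ Set.Ioo p q, deriv μ₀ t = (4 * a t * α₀ t + 2 * d t) * μ₀ t)
    (y : ℝ) (G : ℝ → ℝ → ℂ)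
    (hG : ∀ x t : ℝ, G x t =
        (2 * (Real.pi : ℂ) * Complex.I * (μ₀ t : ℂ)) ^ (-(1/2) : ℂ) *
          Complex.exp (Complex.I *
            ((α₀ t : ℂ) * (x : ℂ) ^ 2 + (β₀ t : ℂ) * (x : ℂ) * (y : ℂ)
              + (γ₀ t : ℂ) * (y : ℂ) ^ 2 + (δ₀ t : ℂ) * (x : ℂ)
              + (ε₀ t : ℂ) * (y : ℂ) + (κ₀ t : ℂ)))) :
    ∀ x : ℝ, ∀ t ∈ Set.Ioo p q,
      Complex.I * deriv (fun s => G x s) t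
        = -(a t : ℂ) * deriv (fun u => deriv (fun v => G v t) u) x
          + (b t : ℂ) * (x : ℂ) ^ 2 * G x t
          - Complex.I * (c t : ℂ) * (x : ℂ) * deriv (fun u => G u t) x
          - Complex.I * (d t : ℂ) * G x t
          - (f t : ℂ) * (x : ℂ) * G x t
          + Complex.I * (g t : ℂ) * deriv (fun u => G u t) x := by
  intro x t ht
  obtain ⟨hμ, hα, hβ, hγ, hδ, hε, hκ⟩ := hdiff t ht
  have hμ0 : μ₀ t ≠ 0 := (hμ₀pos t ht).ne'
  have hGphase (x t : ℝ) : G x t = (2 * π * I * μ₀ t) ^ (-(1 / 2) : ℂ)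
      * cexp (I * greenPhase α₀ β₀ γ₀ δ₀ ε₀ κ₀ y x t) := by
    rw [hG, greenPhase]
    push_cast
    rfl
  refine schrodinger_of_amplitude_phase hGphase
    (hasDerivAt_cpow_neg_half_two_pi_I_mul hμ.hasDerivAt hμ0)
    (hasDerivAt_greenPhase_time hα.hasDerivAt hβ.hasDerivAt hγ.hasDerivAt hδ.hasDerivAt
      hε.hasDerivAt hκ.hasDerivAt x y)
    (hasDerivAt_greenPhase_space α₀ β₀ γ₀ δ₀ ε₀ κ₀ y t)
    ((((hasDerivAt_id' x).const_mul (2 * α₀ t)).add_const (β₀ t * y)).add_const (δ₀ t)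
      |>.congr_deriv (mul_one _))
    ?_ (hamiltonJacobi_of_riccati (eqA₀ t ht) (eqB₀ t ht) (eqC₀ t ht) (eqD₀ t ht) (eqE₀ t ht)
      (eqF₀ t ht) x y)
  have hμ0' : (μ₀ t : ℂ) ≠ 0 := ofReal_ne_zero.mpr hμ0
  rw [eqM₀ t ht]
  push_cast
  field_simp
  ring

/-- The Gaussian
`G(x,t) = (2πiμ₀(t))^{-1/2} exp[i(α₀x² + β₀xy + γ₀y² + δ₀x + ε₀y + κ₀)]`, built from the
fundamental solution of the Riccati-type system, satisfies the linear Schrödinger equation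
of generalized harmonic oscillators on `ℝ × Ioo p q` for each fixed `y`. -/
theorem green_function_solves_linear_schrodinger
    (a b c d f g : ℝ → ℝ)
    (ha : Continuous a) (hb : Continuous b) (hc : Continuous c)
    (hd : Continuous d) (hf : Continuous f) (hg : Continuous g)
    (p q : ℝ)
    (μ₀ α₀ β₀ γ₀ δ₀ ε₀ κ₀ : ℝ → ℝ)
    (hdiff : ∀ t ∈ Set.Ioo p q, DifferentiableAt ℝ μ₀ t ∧ DifferentiableAt ℝ α₀ t ∧
        DifferentiableAt ℝ β₀ t ∧ DifferentiableAt ℝ γ₀ t ∧ DifferentiableAt ℝ δ₀ t ∧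
        DifferentiableAt ℝ ε₀ t ∧ DifferentiableAt ℝ κ₀ t)
    (hμ₀pos : ∀ t ∈ Set.Ioo p q, 0 < μ₀ t)
    (eqA₀ : ∀ t ∈ Set.Ioo p q, deriv α₀ t + b t + 2 * c t * α₀ t + 4 * a t * (α₀ t) ^ 2 = 0)
    (eqB₀ : ∀ t ∈ Set.Ioo p q, deriv β₀ t + (c t + 4 * a t * α₀ t) * β₀ t = 0)
    (eqC₀ : ∀ t ∈ Set.Ioo p q, deriv γ₀ t + a t * (β₀ t) ^ 2 = 0)
    (eqD₀ : ∀ t ∈ Set.Ioo p q, deriv δ₀ t + (c t + 4 * a t * α₀ t) * δ₀ t = f t + 2 * α₀ t * g t)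
    (eqE₀ : ∀ t ∈ Set.Ioo p q, deriv ε₀ t = (g t - 2 * a t * δ₀ t) * β₀ t)
    (eqF₀ : ∀ t ∈ Set.Ioo p q, deriv κ₀ t = g t * δ₀ t - a t * (δ₀ t) ^ 2)
    (eqM₀ : ∀ t ∈ Set.Ioo p q, deriv μ₀ t = (4 * a t * α₀ t + 2 * d t) * μ₀ t)
    (y : ℝ) (G : ℝ → ℝ → ℂ)
    (hG : ∀ x t : ℝ, G x t =
        (2 * (Real.pi : ℂ) * Complex.I * (μ₀ t : ℂ)) ^ (-(1/2) : ℂ) *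
          Complex.exp (Complex.I *
            ((α₀ t : ℂ) * (x : ℂ) ^ 2 + (β₀ t : ℂ) * (x : ℂ) * (y : ℂ)
              + (γ₀ t : ℂ) * (y : ℂ) ^ 2 + (δ₀ t : ℂ) * (x : ℂ)
              + (ε₀ t : ℂ) * (y : ℂ) + (κ₀ t : ℂ)))) :
    ∀ x : ℝ, ∀ t ∈ Set.Ioo p q,
      Complex.I * deriv (fun s => G x s) t
        = -(a t : ℂ) * deriv (fun u => deriv (fun v => G v t) u) x
          + (b t : ℂ) * (x : ℂ) ^ 2 * G x t
          - Complex.I * (c t : ℂ) * (x : ℂ) * deriv (fun u => G u t) x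
          - Complex.I * (d t : ℂ) * G x t
          - (f t : ℂ) * (x : ℂ) * G x t
          + Complex.I * (g t : ℂ) * deriv (fun u => G u t) x :=
  green_function_solves_linear_schrodinger_general a b c d f g p q μ₀ α₀ β₀ γ₀ δ₀ ε₀ κ₀ hdiff hμ₀pos
    eqA₀ eqB₀ eqC₀ eqD₀ eqE₀ eqF₀ eqM₀ y G hG
end

section
/- Let a, b, c, d, f, g : ℝ → ℝ be continuous and h₀, g₀, y, φ real constants. Suppose α, β, γ, δ, ε, κ : ℝ → ℝ are differentiable and satisfy the Riccati-type system α' + b + 2cα + 4aα² = 0, β' + (c+4aα)β = 0, γ' + aβ² = 0, δ' + (c+4aα)δ = f + 2αg, ε' = (g−2aδ)β, κ' = gδ − aδ²; suppose μ > 0 is differentiable with μ' = (4aα + 2d)μ; set h(t) = h₀a(t)β²(t)μ(t); and let F : ℝ → ℝ be twice differentiable with F'' = g₀F + h₀F³. Then ψ(x,t) = (e^{iφ}/√(μ(t))) exp( i(α(t)x² + β(t)xy + γ(t)(y² − g₀) + δ(t)x + ε(t)y + κ(t)) ) F(β(t)x + 2γ(t)y + ε(t)) satisfies iψ_t = −a(t)ψ_xx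 + b(t)x²ψ − ic(t)xψ_x − id(t)ψ − f(t)xψ + ig(t)ψ_x + h(t)|ψ|²ψ. -/
/-!
Write `ψ = exp(iP) Q` with the real phase `P = φ + αx² + βxy + γ(y² - g₀) + δx + εy + κ` and the
real amplitude `Q = F(z)/√μ`, `z = βx + 2γy + ε`. After dividing the equation by `exp(iP)`, its
imaginary part is a transport equation for `Q`: it holds because `z` moves along the
characteristics, `z_t = (g - cx - 2aP_x)β`, while `μ^(-1/2)` decays at the rate `2aα + d`. Its real
part, once `F'' = g₀F + h₀F³` and `|ψ|² = F²/μ` have cancelled the nonlinearity, is the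
Hamilton–Jacobi equation `P_t + aP_x² + bx² + cxP_x - fx - gP_x = ag₀β²`, which the Riccati-type
system gives coefficient by coefficient in `x` and `y`.
-/

open Complex

theorem hasDerivAt_cexp_ofReal_mul_I_mul {P : ℝ → ℝ} {R : ℝ → ℂ} {P' : ℝ} {R' : ℂ} {u : ℝ}
    (hP : HasDerivAt P P' u) (hR : HasDerivAt R R' u) :
    HasDerivAt (fun v => cexp (P v * I) * R v) (cexp (P u * I) * (P' * I * R u + R')) u :=
  (((hP.ofReal_comp.mul_const I).cexp).mul hR).congr_deriv (by ring)

theorem schrodinger_of_phase_amplitude {Ψ : ℝ → ℝ → ℂ} {P Q : ℝ → ℝ → ℝ}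
    (hΨ : ∀ u s, Ψ u s = cexp (P u s * I) * Q u s) {a b c d f g V x t Pt Qt Pxx Qxx : ℝ}
    {Px Qx : ℝ → ℝ}
    (hPt : HasDerivAt (fun s => P x s) Pt t) (hQt : HasDerivAt (fun s => Q x s) Qt t)
    (hPx : ∀ u, HasDerivAt (fun v => P v t) (Px u) u)
    (hQx : ∀ u, HasDerivAt (fun v => Q v t) (Qx u) u)
    (hPxx : HasDerivAt Px Pxx x) (hQxx : HasDerivAt Qx Qxx x)
    (hre : -Pt * Q x t = -a * (Qxx - Px x ^ 2 * Q x t) + b * x ^ 2 * Q x t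
      + c * x * Px x * Q x t - f * x * Q x t - g * Px x * Q x t + V * Q x t)
    (him : Qt = -a * (2 * Px x * Qx x + Pxx * Q x t) - c * x * Qx x - d * Q x t + g * Qx x) :
    I * deriv (fun s => Ψ x s) t
      = -(a : ℂ) * deriv (fun u => deriv (fun v => Ψ v t) u) x
        + b * (x : ℂ) ^ 2 * Ψ x t - I * c * x * deriv (fun u => Ψ u t) x
        - I * d * Ψ x t - f * x * Ψ x t + I * g * deriv (fun u => Ψ u t) x + V * Ψ x t := by
  simp only [hΨ]
  have hΨx : deriv (fun v => cexp (P v t * I) * Q v t) = fun u =>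
      cexp (P u t * I) * (Px u * I * Q u t + Qx u) :=
    funext fun u => (hasDerivAt_cexp_ofReal_mul_I_mul (hPx u) (hQx u).ofReal_comp).deriv
  have hRx : HasDerivAt (fun u => (Px u * I * Q u t + Qx u : ℂ))
      (Pxx * I * Q x t + Px x * I * Qx x + Qxx) x :=
    ((hPxx.ofReal_comp.mul_const I).mul (hQx x).ofReal_comp).add hQxx.ofReal_comp
  have hΨxx := hasDerivAt_cexp_ofReal_mul_I_mul (hPx x) hRx
  rw [(hasDerivAt_cexp_ofReal_mul_I_mul hPt hQt.ofReal_comp).deriv, hΨx, hΨxx.deriv]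
  have hre' : (-Pt * Q x t : ℂ) = -a * (Qxx - Px x ^ 2 * Q x t) + b * x ^ 2 * Q x t
      + c * x * Px x * Q x t - f * x * Q x t - g * Px x * Q x t + V * Q x t := by
    exact_mod_cast hre
  have him' : (Qt : ℂ) = -a * (2 * Px x * Qx x + Pxx * Q x t) - c * x * Qx x - d * Q x t
      + g * Qx x := by
    exact_mod_cast him
  linear_combination cexp (P x t * I) * (hre' + I * him'
    + (Pt * Q x t + a * Px x ^ 2 * Q x t + c * x * Px x * Q x t - g * Px x * Q x t) * I_sq)

section Soliton

variable (α β γ δ ε κ : ℝ → ℝ) (g₀ y φ : ℝ)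

def solitonPhase (u s : ℝ) : ℝ :=
  φ + α s * u ^ 2 + β s * u * y + γ s * (y ^ 2 - g₀) + δ s * u + ε s * y + κ s

def solitonCoord (u s : ℝ) : ℝ := β s * u + 2 * γ s * y + ε s

theorem cexp_mul_div_sqrt_eq_cexp_solitonPhase_mul (μ F : ℝ → ℝ) (u s : ℝ) :
    cexp (I * φ) / (√(μ s) : ℂ) * cexp (I * (α s * u ^ 2 + β s * u * y + γ s * (y ^ 2 - g₀)
      + δ s * u + ε s * y + κ s)) * (F (β s * u + 2 * γ s * y + ε s) : ℂ)
      = cexp (solitonPhase α β γ δ ε κ g₀ y φ u s * I)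
        * (F (solitonCoord β γ ε y u s) * (√(μ s))⁻¹ : ℝ) := by
  rw [solitonPhase, solitonCoord, div_eq_mul_inv, mul_right_comm _ _ (cexp _), ← exp_add]
  push_cast
  ring_nf

theorem hasDerivAt_solitonPhase_space (t u : ℝ) :
    HasDerivAt (fun v => solitonPhase α β γ δ ε κ g₀ y φ v t) (2 * α t * u + β t * y + δ t) u := by
  have h := ((((((hasDerivAt_const u φ).add ((hasDerivAt_pow 2 u).const_mul (α t))).add
    (((hasDerivAt_id u).const_mul (β t)).mul_const y)).add
    (hasDerivAt_const u (γ t * (y ^ 2 - g₀)))).add ((hasDerivAt_id u).const_mul (δ t))).add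
    (hasDerivAt_const u (ε t * y))).add (hasDerivAt_const u (κ t))
  exact h.congr_deriv (by push_cast; ring)

variable {α β γ δ ε κ} in
theorem hasDerivAt_solitonPhase_time {x t : ℝ} (hα : DifferentiableAt ℝ α t)
    (hβ : DifferentiableAt ℝ β t) (hγ : DifferentiableAt ℝ γ t) (hδ : DifferentiableAt ℝ δ t)
    (hε : DifferentiableAt ℝ ε t) (hκ : DifferentiableAt ℝ κ t) :
    HasDerivAt (fun s => solitonPhase α β γ δ ε κ g₀ y φ x s)
      (deriv α t * x ^ 2 + deriv β t * x * y + deriv γ t * (y ^ 2 - g₀) + deriv δ t * x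
        + deriv ε t * y + deriv κ t) t := by
  have h := ((((((hasDerivAt_const t φ).add (hα.hasDerivAt.mul_const (x ^ 2))).add
    ((hβ.hasDerivAt.mul_const x).mul_const y)).add (hγ.hasDerivAt.mul_const (y ^ 2 - g₀))).add
    (hδ.hasDerivAt.mul_const x)).add (hε.hasDerivAt.mul_const y)).add hκ.hasDerivAt
  exact h.congr_deriv (by ring)

theorem hasDerivAt_solitonCoord_space (t u : ℝ) :
    HasDerivAt (fun v => solitonCoord β γ ε y v t) (β t) u := by
  have h := (((hasDerivAt_id u).const_mul (β t)).add_const (2 * γ t * y)).add_const (ε t)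
  exact h.congr_deriv (by simp)

variable {β γ ε} in
theorem hasDerivAt_solitonCoord_time {x t : ℝ} (hβ : DifferentiableAt ℝ β t)
    (hγ : DifferentiableAt ℝ γ t) (hε : DifferentiableAt ℝ ε t) :
    HasDerivAt (fun s => solitonCoord β γ ε y x s)
      (deriv β t * x + 2 * deriv γ t * y + deriv ε t) t :=
  ((hβ.hasDerivAt.mul_const x).add ((hγ.hasDerivAt.const_mul 2).mul_const y)).add hε.hasDerivAt

end Soliton

variable {α β γ δ ε κ a b c f g : ℝ → ℝ} in
theorem riccati_hamiltonJacobi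
    (eqA : ∀ t, deriv α t + b t + 2 * c t * α t + 4 * a t * (α t) ^ 2 = 0)
    (eqB : ∀ t, deriv β t + (c t + 4 * a t * α t) * β t = 0)
    (eqC : ∀ t, deriv γ t + a t * (β t) ^ 2 = 0)
    (eqD : ∀ t, deriv δ t + (c t + 4 * a t * α t) * δ t = f t + 2 * α t * g t)
    (eqE : ∀ t, deriv ε t = (g t - 2 * a t * δ t) * β t)
    (eqF : ∀ t, deriv κ t = g t * δ t - a t * (δ t) ^ 2) (g₀ y x t : ℝ) :
    deriv α t * x ^ 2 + deriv β t * x * y + deriv γ t * (y ^ 2 - g₀) + deriv δ t * x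
      + deriv ε t * y + deriv κ t + a t * (2 * α t * x + β t * y + δ t) ^ 2 + b t * x ^ 2
      + c t * x * (2 * α t * x + β t * y + δ t) - f t * x
      - g t * (2 * α t * x + β t * y + δ t) - a t * g₀ * β t ^ 2 = 0 := by
  linear_combination x ^ 2 * eqA t + x * y * eqB t + (y ^ 2 - g₀) * eqC t + x * eqD t
    + y * eqE t + eqF t

variable {α β γ δ ε a c g : ℝ → ℝ} in
theorem riccati_characteristic
    (eqB : ∀ t, deriv β t + (c t + 4 * a t * α t) * β t = 0)
    (eqC : ∀ t, deriv γ t + a t * (β t) ^ 2 = 0)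
    (eqE : ∀ t, deriv ε t = (g t - 2 * a t * δ t) * β t) (y x t : ℝ) :
    deriv β t * x + 2 * deriv γ t * y + deriv ε t
      = (g t - c t * x - 2 * a t * (2 * α t * x + β t * y + δ t)) * β t := by
  linear_combination x * eqB t + 2 * y * eqC t + eqE t

theorem hasDerivAt_inv_sqrt_of_hasDerivAt_mul {μ : ℝ → ℝ} {k t : ℝ} (hμ : HasDerivAt μ (k * μ t) t)
    (hμt : 0 < μ t) : HasDerivAt (fun s => (√(μ s))⁻¹) (-(k / 2) * (√(μ t))⁻¹) t := by
  have hs : √(μ t) ≠ 0 := (Real.sqrt_pos.mpr hμt).ne'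
  refine ((hμ.sqrt hμt.ne').inv hs).congr_deriv ?_
  rw [Real.sq_sqrt hμt.le]
  field_simp

theorem soliton_like_solution_nonautonomous_NLS_general
    (a b c d f g : ℝ → ℝ) (h₀ g₀ y φ : ℝ)
    (α β γ δ ε κ : ℝ → ℝ)
    (hα : Differentiable ℝ α) (hβ : Differentiable ℝ β) (hγ : Differentiable ℝ γ)
    (hδ : Differentiable ℝ δ) (hε : Differentiable ℝ ε) (hκ : Differentiable ℝ κ)
    (eqA : ∀ t, deriv α t + b t + 2 * c t * α t + 4 * a t * (α t) ^ 2 = 0)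
    (eqB : ∀ t, deriv β t + (c t + 4 * a t * α t) * β t = 0)
    (eqC : ∀ t, deriv γ t + a t * (β t) ^ 2 = 0)
    (eqD : ∀ t, deriv δ t + (c t + 4 * a t * α t) * δ t = f t + 2 * α t * g t)
    (eqE : ∀ t, deriv ε t = (g t - 2 * a t * δ t) * β t)
    (eqF : ∀ t, deriv κ t = g t * δ t - a t * (δ t) ^ 2)
    (μ : ℝ → ℝ) (hμpos : ∀ t, 0 < μ t) (hμ : Differentiable ℝ μ)
    (eqM : ∀ t, deriv μ t = (4 * a t * α t + 2 * d t) * μ t)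
    (h : ℝ → ℝ) (hh : ∀ t, h t = h₀ * a t * (β t) ^ 2 * μ t)
    (F : ℝ → ℝ)
    (hF : Differentiable ℝ F) (hF' : Differentiable ℝ (deriv F))
    (hode : ∀ z, deriv (deriv F) z = g₀ * F z + h₀ * (F z) ^ 3)
    (ψ : ℝ → ℝ → ℂ)
    (hψ : ∀ x t : ℝ, ψ x t =
        Complex.exp (Complex.I * (φ : ℂ)) / (Real.sqrt (μ t) : ℂ) *
          Complex.exp (Complex.I *
            ((α t : ℂ) * (x : ℂ) ^ 2 + (β t : ℂ) * (x : ℂ) * (y : ℂ)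
              + (γ t : ℂ) * ((y : ℂ) ^ 2 - (g₀ : ℂ)) + (δ t : ℂ) * (x : ℂ)
              + (ε t : ℂ) * (y : ℂ) + (κ t : ℂ))) *
          (F (β t * x + 2 * γ t * y + ε t) : ℂ)) :
    ∀ x t : ℝ, Complex.I * deriv (fun s => ψ x s) t
        = -(a t : ℂ) * deriv (fun u => deriv (fun v => ψ v t) u) x
          + (b t : ℂ) * (x : ℂ) ^ 2 * ψ x t
          - Complex.I * (c t : ℂ) * (x : ℂ) * deriv (fun u => ψ u t) x
          - Complex.I * (d t : ℂ) * ψ x t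
          - (f t : ℂ) * (x : ℂ) * ψ x t
          + Complex.I * (g t : ℂ) * deriv (fun u => ψ u t) x
          + (h t : ℂ) * (‖ψ x t‖ : ℂ) ^ 2 * ψ x t := by
  intro x t
  have hψ' : ∀ u s, ψ u s = cexp (solitonPhase α β γ δ ε κ g₀ y φ u s * I)
      * (F (solitonCoord β γ ε y u s) * (√(μ s))⁻¹ : ℝ) := fun u s =>
    (hψ u s).trans (cexp_mul_div_sqrt_eq_cexp_solitonPhase_mul α β γ δ ε κ g₀ y φ μ F u s)
  have hr : HasDerivAt (fun s => (√(μ s))⁻¹) (-(2 * a t * α t + d t) * (√(μ t))⁻¹) t := by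
    convert hasDerivAt_inv_sqrt_of_hasDerivAt_mul (eqM t ▸ (hμ t).hasDerivAt) (hμpos t) using 2
    ring
  have hV : h t * ‖ψ x t‖ ^ 2 = h₀ * a t * β t ^ 2 * F (solitonCoord β γ ε y x t) ^ 2 := by
    rw [hψ', norm_mul, norm_exp_ofReal_mul_I, one_mul, norm_real, Real.norm_eq_abs, sq_abs,
      hh, mul_pow, inv_pow, Real.sq_sqrt (hμpos t).le]
    field_simp [(hμpos t).ne']
  have hZx := hasDerivAt_solitonCoord_space β γ ε y t
  have key := schrodinger_of_phase_amplitude (V := h t * ‖ψ x t‖ ^ 2)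
    (Px := fun u => 2 * α t * u + β t * y + δ t) (Pxx := 2 * α t)
    (Qx := fun u => deriv F (solitonCoord β γ ε y u t) * β t * (√(μ t))⁻¹)
    (a := a t) (b := b t) (c := c t) (d := d t) (f := f t) (g := g t) hψ'
    (hasDerivAt_solitonPhase_time g₀ y φ (hα t) (hβ t) (hγ t) (hδ t) (hε t) (hκ t))
    (((hF _).hasDerivAt.comp t (hasDerivAt_solitonCoord_time y (hβ t) (hγ t) (hε t))).mul hr)
    (hasDerivAt_solitonPhase_space α β γ δ ε κ g₀ y φ t)
    (fun u => ((hF _).hasDerivAt.comp u (hZx u)).mul_const _)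
    ((((hasDerivAt_id x).const_mul (2 * α t)).add_const _).add_const _ |>.congr_deriv (mul_one _))
    ((((hF' _).hasDerivAt.comp x (hZx x)).mul_const (β t)).mul_const _)
    (by
      rw [hV, hode]
      linear_combination (-(F (solitonCoord β γ ε y x t) * (√(μ t))⁻¹))
        * riccati_hamiltonJacobi eqA eqB eqC eqD eqE eqF g₀ y x t)
    (by
      rw [Function.comp_apply, riccati_characteristic eqB eqC eqE y x t]
      ring)
  exact_mod_cast key

/-- The soliton-like solution
`ψ(x,t) = (e^{iφ}/√μ) exp(i(αx² + βxy + γ(y² - g₀) + δx + εy + κ)) F(βx + 2γy + ε)`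
of the nonautonomous nonlinear Schrödinger equation with quadratic Hamiltonian,
built from a solution of the Riccati-type system and a profile `F'' = g₀F + h₀F³`. -/
theorem soliton_like_solution_nonautonomous_NLS
    (a b c d f g : ℝ → ℝ) (h₀ g₀ y φ : ℝ)
    (ha : Continuous a) (hb : Continuous b) (hc : Continuous c)
    (hd : Continuous d) (hf : Continuous f) (hg : Continuous g)
    (α β γ δ ε κ : ℝ → ℝ)
    (hα : Differentiable ℝ α) (hβ : Differentiable ℝ β) (hγ : Differentiable ℝ γ)
    (hδ : Differentiable ℝ δ) (hε : Differentiable ℝ ε) (hκ : Differentiable ℝ κ)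
    (eqA : ∀ t, deriv α t + b t + 2 * c t * α t + 4 * a t * (α t) ^ 2 = 0)
    (eqB : ∀ t, deriv β t + (c t + 4 * a t * α t) * β t = 0)
    (eqC : ∀ t, deriv γ t + a t * (β t) ^ 2 = 0)
    (eqD : ∀ t, deriv δ t + (c t + 4 * a t * α t) * δ t = f t + 2 * α t * g t)
    (eqE : ∀ t, deriv ε t = (g t - 2 * a t * δ t) * β t)
    (eqF : ∀ t, deriv κ t = g t * δ t - a t * (δ t) ^ 2)
    (μ : ℝ → ℝ) (hμpos : ∀ t, 0 < μ t) (hμ : Differentiable ℝ μ)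
    (eqM : ∀ t, deriv μ t = (4 * a t * α t + 2 * d t) * μ t)
    (h : ℝ → ℝ) (hh : ∀ t, h t = h₀ * a t * (β t) ^ 2 * μ t)
    (F : ℝ → ℝ)
    (hF : Differentiable ℝ F) (hF' : Differentiable ℝ (deriv F))
    (hode : ∀ z, deriv (deriv F) z = g₀ * F z + h₀ * (F z) ^ 3)
    (ψ : ℝ → ℝ → ℂ)
    (hψ : ∀ x t : ℝ, ψ x t =
        Complex.exp (Complex.I * (φ : ℂ)) / (Real.sqrt (μ t) : ℂ) *
          Complex.exp (Complex.I *
            ((α t : ℂ) * (x : ℂ) ^ 2 + (β t : ℂ) * (x : ℂ) * (y : ℂ)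
              + (γ t : ℂ) * ((y : ℂ) ^ 2 - (g₀ : ℂ)) + (δ t : ℂ) * (x : ℂ)
              + (ε t : ℂ) * (y : ℂ) + (κ t : ℂ))) *
          (F (β t * x + 2 * γ t * y + ε t) : ℂ)) :
    ∀ x t : ℝ, Complex.I * deriv (fun s => ψ x s) t
        = -(a t : ℂ) * deriv (fun u => deriv (fun v => ψ v t) u) x
          + (b t : ℂ) * (x : ℂ) ^ 2 * ψ x t
          - Complex.I * (c t : ℂ) * (x : ℂ) * deriv (fun u => ψ u t) x
          - Complex.I * (d t : ℂ) * ψ x t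
          - (f t : ℂ) * (x : ℂ) * ψ x t
          + Complex.I * (g t : ℂ) * deriv (fun u => ψ u t) x
          + (h t : ℂ) * (‖ψ x t‖ : ℂ) ^ 2 * ψ x t :=
  soliton_like_solution_nonautonomous_NLS_general a b c d f g h₀ g₀ y φ α β γ δ ε κ hα hβ hγ hδ hε
    hκ eqA eqB eqC eqD eqE eqF μ hμpos hμ eqM h hh F hF hF' hode ψ hψ
end

section
/- Let ω ≠ 0 and α₀, β₀, γ₀, δ₀, ε₀, κ₀, μ₀ be real constants (values at t = 0), and let I be an interval containing 0 on which D(t) := 4α₀ sin ωt + ω cos ωt ≠ 0. Then the functions α(t) = (ω/4)(4α₀ cos ωt − ω sin ωt)/D(t), β(t) = ωβ₀/D(t), γ(t) = γ₀ − β₀² sin ωt / D(t), δ(t) = ωδ₀/D(t), ε(t) = ε₀ − 2β₀δ₀ sin ωt / D(t), κ(t) = κ₀ − δ₀² sin ωt / D(t) satisfy on I the Riccati-type system with coefficients a = 1, b = ω²/4, c = d = f = g = 0: namely α' + ω²/4 + 4α² = 0, β' + 4αβ = 0, γ' + β² = 0, δ' + 4αδ = 0, ε' = −2δβ, κ' =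 −δ², and moreover μ(t) = μ₀ D(t)/ω satisfies μ' = 4αμ. -/
/-!
With `D = 4α₀ sin ωt + ω cos ωt`, a solution of the characteristic equation `D'' + ω² D = 0`,
every component is expressed through `D`: `α = D' / (4D)` is a quarter of the logarithmic
derivative of `D`, so `μ ∝ D` solves `μ' = 4αμ`, the Riccati equation for `α` is the
characteristic equation rewritten, and `β, δ ∝ 1/D` satisfy `β' = -4αβ`. The remaining
components are affine in `sin ωt / D`, whose derivative `ω² / D²` is the constant Wronskian of
`sin ωt` and `D` divided by `D²`; this makes `γ', ε', κ'` equal to `-β², -2βδ, -δ²`.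
-/

open Real

noncomputable def oscillator (A B ω t : ℝ) : ℝ := A * sin (ω * t) + B * cos (ω * t)

noncomputable def oscillatorDeriv (A B ω t : ℝ) : ℝ := ω * (A * cos (ω * t) - B * sin (ω * t))

section Oscillator

variable (A B ω t : ℝ)

theorem hasDerivAt_sin_mul : HasDerivAt (fun u => sin (ω * u)) (ω * cos (ω * t)) t := by
  simpa [mul_comm] using ((hasDerivAt_id t).const_mul ω).sin

theorem hasDerivAt_cos_mul : HasDerivAt (fun u => cos (ω * u)) (-(ω * sin (ω * t))) t := by
  simpa [mul_comm] using ((hasDerivAt_id t).const_mul ω).cos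

theorem hasDerivAt_oscillator :
    HasDerivAt (oscillator A B ω) (oscillatorDeriv A B ω t) t := by
  refine (((hasDerivAt_sin_mul ω t).const_mul A).add
    ((hasDerivAt_cos_mul ω t).const_mul B)).congr_deriv ?_
  simp only [oscillatorDeriv]
  ring

theorem hasDerivAt_oscillatorDeriv :
    HasDerivAt (oscillatorDeriv A B ω) (-ω ^ 2 * oscillator A B ω t) t := by
  refine ((((hasDerivAt_cos_mul ω t).const_mul A).sub
    ((hasDerivAt_sin_mul ω t).const_mul B)).const_mul ω).congr_deriv ?_
  simp only [oscillator]
  ring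

theorem wronskian_sin_mul_oscillator :
    ω * cos (ω * t) * oscillator A B ω t - sin (ω * t) * oscillatorDeriv A B ω t = ω * B := by
  simp only [oscillator, oscillatorDeriv]
  linear_combination ω * B * sin_sq_add_cos_sq (ω * t)

variable {A B ω t}

theorem hasDerivAt_sin_mul_div_oscillator (ht : oscillator A B ω t ≠ 0) :
    HasDerivAt (fun u => sin (ω * u) / oscillator A B ω u)
      (ω * B / oscillator A B ω t ^ 2) t := by
  refine ((hasDerivAt_sin_mul ω t).div (hasDerivAt_oscillator A B ω t) ht).congr_deriv ?_
  rw [wronskian_sin_mul_oscillator]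

end Oscillator

theorem hasDerivAt_div_four_mul_of_harmonic {D D' : ℝ → ℝ} {ω t : ℝ} (hD : HasDerivAt D (D' t) t)
    (hD' : HasDerivAt D' (-ω ^ 2 * D t) t) (ht : D t ≠ 0) :
    HasDerivAt (fun u => D' u / (4 * D u)) (-(ω ^ 2 / 4) - 4 * (D' t / (4 * D t)) ^ 2) t := by
  refine (hD'.div (hD.const_mul 4) (mul_ne_zero four_ne_zero ht)).congr_deriv ?_
  field_simp

theorem riccati_solution_harmonic_oscillator_general
    (ω α₀ β₀ γ₀ δ₀ ε₀ κ₀ μ₀ : ℝ)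
    (S : Set ℝ)
    (D : ℝ → ℝ)
    (hD : ∀ t, D t = 4 * α₀ * Real.sin (ω * t) + ω * Real.cos (ω * t))
    (hDne : ∀ t ∈ S, D t ≠ 0)
    (α β γ δ ε κ μ : ℝ → ℝ)
    (hα : ∀ t, α t = ω / 4 * (4 * α₀ * Real.cos (ω * t) - ω * Real.sin (ω * t)) / D t)
    (hβ : ∀ t, β t = ω * β₀ / D t)
    (hγ : ∀ t, γ t = γ₀ - β₀ ^ 2 * Real.sin (ω * t) / D t)
    (hδ : ∀ t, δ t = ω * δ₀ / D t)
    (hε : ∀ t, ε t = ε₀ - 2 * β₀ * δ₀ * Real.sin (ω * t) / D t)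
    (hκ : ∀ t, κ t = κ₀ - δ₀ ^ 2 * Real.sin (ω * t) / D t)
    (hμ : ∀ t, μ t = μ₀ * D t / ω) :
    ∀ t ∈ S,
      deriv α t + ω ^ 2 / 4 + 4 * (α t) ^ 2 = 0 ∧
      deriv β t + 4 * α t * β t = 0 ∧
      deriv γ t + (β t) ^ 2 = 0 ∧
      deriv δ t + 4 * α t * δ t = 0 ∧
      deriv ε t = -(2 * δ t * β t) ∧
      deriv κ t = -(δ t) ^ 2 ∧
      deriv μ t = 4 * α t * μ t := by
  intro t ht
  obtain rfl : D = oscillator (4 * α₀) ω ω := funext hD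
  have hDt := hDne t ht
  have hDderiv := hasDerivAt_oscillator (4 * α₀) ω ω t
  have hαD : α = fun u => oscillatorDeriv (4 * α₀) ω ω u / (4 * oscillator (4 * α₀) ω ω u) :=
    funext fun u => by rw [hα]; simp only [oscillatorDeriv]; ring
  have hsin := hasDerivAt_sin_mul_div_oscillator hDt
  have hquot (k c : ℝ) : deriv (fun u => k - c * sin (ω * u) / oscillator (4 * α₀) ω ω u) t =
      -(c * (ω * ω) / oscillator (4 * α₀) ω ω t ^ 2) := by
    have := (hsin.const_mul c).const_sub k
    simp only [← mul_div_assoc] at this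
    exact this.deriv
  refine ⟨?_, ?_, ?_, ?_, ?_, ?_, ?_⟩
  · rw [hαD, (hasDerivAt_div_four_mul_of_harmonic hDderiv
      (hasDerivAt_oscillatorDeriv (4 * α₀) ω ω t) hDt).deriv]
    ring
  · rw [funext hβ, deriv_const_div _ hDderiv.differentiableAt hDt, hDderiv.deriv, hαD]
    field_simp
    ring
  · rw [funext hγ, hquot, hβ]
    ring
  · rw [funext hδ, deriv_const_div _ hDderiv.differentiableAt hDt, hDderiv.deriv, hαD]
    field_simp
    ring
  · rw [funext hε, hquot, hβ, hδ]
    ring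
  · rw [funext hκ, hquot, hδ]
    ring
  · rw [funext hμ, ((hDderiv.const_mul μ₀).div_const ω).deriv, hαD]
    field_simp

/-- Explicit general solution of the Riccati-type system for the harmonic
oscillator (`a = 1`, `b = ω²/4`, `c = d = f = g = 0`), with
`D(t) = 4α₀ sin ωt + ω cos ωt` nonvanishing on an interval `S` containing `0`. -/
theorem riccati_solution_harmonic_oscillator
    (ω α₀ β₀ γ₀ δ₀ ε₀ κ₀ μ₀ : ℝ) (hω : ω ≠ 0)
    (S : Set ℝ) (hS : Set.OrdConnected S) (h0S : (0:ℝ) ∈ S)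
    (D : ℝ → ℝ)
    (hD : ∀ t, D t = 4 * α₀ * Real.sin (ω * t) + ω * Real.cos (ω * t))
    (hDne : ∀ t ∈ S, D t ≠ 0)
    (α β γ δ ε κ μ : ℝ → ℝ)
    (hα : ∀ t, α t = ω / 4 * (4 * α₀ * Real.cos (ω * t) - ω * Real.sin (ω * t)) / D t)
    (hβ : ∀ t, β t = ω * β₀ / D t)
    (hγ : ∀ t, γ t = γ₀ - β₀ ^ 2 * Real.sin (ω * t) / D t)
    (hδ : ∀ t, δ t = ω * δ₀ / D t)
    (hε : ∀ t, ε t = ε₀ - 2 * β₀ * δ₀ * Real.sin (ω * t) / D t)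
    (hκ : ∀ t, κ t = κ₀ - δ₀ ^ 2 * Real.sin (ω * t) / D t)
    (hμ : ∀ t, μ t = μ₀ * D t / ω) :
    ∀ t ∈ S,
      deriv α t + ω ^ 2 / 4 + 4 * (α t) ^ 2 = 0 ∧
      deriv β t + 4 * α t * β t = 0 ∧
      deriv γ t + (β t) ^ 2 = 0 ∧
      deriv δ t + 4 * α t * δ t = 0 ∧
      deriv ε t = -(2 * δ t * β t) ∧
      deriv κ t = -(δ t) ^ 2 ∧
      deriv μ t = 4 * α t * μ t :=
  riccati_solution_harmonic_oscillator_general ω α₀ β₀ γ₀ δ₀ ε₀ κ₀ μ₀ S D hD hDne α β γ δ ε κ μ hα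
    hβ hγ hδ hε hκ hμ
end

section
/- Let ω ≠ 0 and h₀ be real constants, and let χ : ℝ × ℝ → ℂ be twice continuously differentiable satisfying iχ_τ + h₀|χ|²χ = χ_ξξ. Then on the strip { (x,t) : cos ωt > 0 } the function ψ(x, t) = (cos ωt)^{−1/2} e^{−i(ω/4)x² tan ωt} χ( x/cos ωt, −tan(ωt)/ω ) satisfies the modified harmonic-soliton equation iψ_t + ψ_xx = (ω²/4)x²ψ + (h₀/cos ωt)|ψ|²ψ. -/
/-!
Write `ψ = F · χ(ξ, τ)` with `ξ = x / cos ωt`, `τ = -tan(ωt) / ω` and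
`F = (cos ωt)^{-1/2} e^{-iωx² tan(ωt)/4}`. By the chain rule the `χ_ξ` terms and the first-order
terms in `tan ωt` cancel, leaving
`iψ_t + ψ_xx = F · ((ω²x²/4)(sec² ωt - tan² ωt) χ + (χ_ξξ - iχ_τ) / cos² ωt)`.
Now `sec² - tan² = 1` produces the harmonic potential, the autonomous equation turns
`χ_ξξ - iχ_τ` into `h₀|χ|²χ`, and `|ψ|² = |χ|² / cos ωt` since `|F|² = 1 / cos ωt`.
-/

open Complex

section PartialDerivatives

variable {f : ℝ → ℝ → ℂ}

theorem DifferentiableAt.hasDerivAt_comp_prodMk {a b : ℝ → ℝ} {a' b' t : ℝ}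
    (hf : DifferentiableAt ℝ (fun p : ℝ × ℝ => f p.1 p.2) (a t, b t))
    (ha : HasDerivAt a a' t) (hb : HasDerivAt b b' t) :
    HasDerivAt (fun s => f (a s) (b s))
      (a' * deriv (fun u => f u (b t)) (a t) + b' * deriv (fun s => f (a t) s) (b t)) t := by
  have hF := hf.hasFDerivAt
  have h₁ : HasDerivAt (fun u => f u (b t))
      (fderiv ℝ (fun p : ℝ × ℝ => f p.1 p.2) (a t, b t) (1, 0)) (a t) := by
    exact hF.comp_hasDerivAt (a t) ((hasDerivAt_id (a t)).prodMk (hasDerivAt_const (a t) (b t)))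
  have h₂ : HasDerivAt (fun s => f (a t) s)
      (fderiv ℝ (fun p : ℝ × ℝ => f p.1 p.2) (a t, b t) (0, 1)) (b t) := by
    exact hF.comp_hasDerivAt (b t) ((hasDerivAt_const (b t) (a t)).prodMk (hasDerivAt_id (b t)))
  have hsplit : ((a', b') : ℝ × ℝ) = a' • (1, 0) + b' • (0, 1) := by ext <;> simp
  refine (hF.comp_hasDerivAt t (ha.prodMk hb)).congr_deriv ?_
  rw [h₁.deriv, h₂.deriv, hsplit, map_add, map_smul, map_smul, Complex.real_smul,
    Complex.real_smul]

theorem ContDiff.differentiable_deriv_fst_s17 (hf : ContDiff ℝ 2 (fun p : ℝ × ℝ => f p.1 p.2)) :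
    Differentiable ℝ (fun p : ℝ × ℝ => deriv (fun u => f u p.2) p.1) := by
  have hdiff : Differentiable ℝ (fun p : ℝ × ℝ => f p.1 p.2) := hf.differentiable (by norm_num)
  have heq : (fun p : ℝ × ℝ => deriv (fun u => f u p.2) p.1)
      = fun p => fderiv ℝ (fun p : ℝ × ℝ => f p.1 p.2) p (1, 0) := by
    funext p
    exact ((hdiff p).hasFDerivAt.comp_hasDerivAt p.1
      ((hasDerivAt_id p.1).prodMk (hasDerivAt_const p.1 p.2))).deriv
  rw [heq]
  exact ((hf.fderiv_right (m := 1) (by norm_num)).differentiable one_ne_zero).clm_apply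
    (differentiable_const _)

end PartialDerivatives

section GaussianModulation

variable {g : ℝ → ℂ}

theorem hasDerivAt_comp_div_const (hg : Differentiable ℝ g) (k x : ℝ) :
    HasDerivAt (fun v => g (v / k)) ((k : ℂ)⁻¹ * deriv g (x / k)) x := by
  simpa [Function.comp_def, Complex.real_smul] using
    (hg (x / k)).hasDerivAt.scomp x ((hasDerivAt_id x).div_const k)

variable (K a : ℂ) (k : ℝ)

theorem hasDerivAt_cexp_mul_sq (x : ℝ) :
    HasDerivAt (fun v : ℝ => cexp (a * v ^ 2)) (cexp (a * x ^ 2) * (2 * a * x)) x := by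
  have hsq : HasDerivAt (fun v : ℝ => a * (v : ℂ) ^ 2) (2 * a * x) x := by
    simpa [mul_left_comm, mul_assoc] using ((hasDerivAt_pow 2 x).ofReal_comp).const_mul a
  exact hsq.cexp

theorem hasDerivAt_gaussian_mul_comp_div (hg : Differentiable ℝ g) (x : ℝ) :
    HasDerivAt (fun v : ℝ => K * cexp (a * v ^ 2) * g (v / k))
      (K * cexp (a * x ^ 2) * (2 * a * x * g (x / k) + (k : ℂ)⁻¹ * deriv g (x / k))) x :=
  (((hasDerivAt_cexp_mul_sq a x).const_mul K).fun_mul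
    (hasDerivAt_comp_div_const hg k x)).congr_deriv (by ring)

theorem deriv_deriv_gaussian_mul_comp_div (hg : Differentiable ℝ g)
    (hg' : Differentiable ℝ (deriv g)) (x : ℝ) :
    deriv (deriv fun v : ℝ => K * cexp (a * v ^ 2) * g (v / k)) x
      = K * cexp (a * x ^ 2) * ((2 * a + 4 * a ^ 2 * x ^ 2) * g (x / k)
          + 4 * a * x / k * deriv g (x / k) + deriv (deriv g) (x / k) / k ^ 2) := by
  have hinner : HasDerivAt (fun v : ℝ => 2 * a * v * g (v / k) + (k : ℂ)⁻¹ * deriv g (v / k))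
      (2 * a * g (x / k) + 2 * a * x * ((k : ℂ)⁻¹ * deriv g (x / k))
        + (k : ℂ)⁻¹ * ((k : ℂ)⁻¹ * deriv (deriv g) (x / k))) x :=
    (((((hasDerivAt_id x).ofReal_comp).const_mul (2 * a)).fun_mul
      (hasDerivAt_comp_div_const hg k x)).congr_deriv (by simp)).fun_add
      ((hasDerivAt_comp_div_const hg' k x).const_mul (k⁻¹ : ℂ))
  rw [funext (hasDerivAt_gaussian_mul_comp_div K a k hg · |>.deriv)]
  exact ((((hasDerivAt_cexp_mul_sq a x).const_mul K).fun_mul hinner).congr_deriv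
    (by ring)).deriv

end GaussianModulation

theorem hasDerivAt_inv_sqrt_cos_mul {ω t : ℝ} (hc : 0 < Real.cos (ω * t)) :
    HasDerivAt (fun s => (√(Real.cos (ω * s)))⁻¹)
      ((√(Real.cos (ω * t)))⁻¹ * (ω * Real.tan (ω * t) / 2)) t := by
  refine ((((hasDerivAt_const_mul ω).cos).sqrt hc.ne').inv (Real.sqrt_pos.2 hc).ne').congr_deriv ?_
  rw [Real.tan_eq_sin_div_cos, Real.sq_sqrt hc.le]
  field_simp

theorem hasDerivAt_tan_mul {ω t : ℝ} (hc : Real.cos (ω * t) ≠ 0) :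
    HasDerivAt (fun s => Real.tan (ω * s)) (ω / Real.cos (ω * t) ^ 2) t :=
  ((Real.hasDerivAt_tan hc).comp t (hasDerivAt_const_mul ω)).congr_deriv (by ring)

noncomputable def lensFactor (ω x t : ℝ) : ℂ :=
  (√(Real.cos (ω * t)) : ℂ)⁻¹ * cexp (-I * (ω / 4) * x ^ 2 * Real.tan (ω * t))

noncomputable def lensTransform (ω : ℝ) (χ : ℝ → ℝ → ℂ) (x t : ℝ) : ℂ :=
  lensFactor ω x t * χ (x / Real.cos (ω * t)) (-Real.tan (ω * t) / ω)

section LensTransform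

variable {ω : ℝ} {χ : ℝ → ℝ → ℂ}

theorem norm_lensFactor (x t : ℝ) : ‖lensFactor ω x t‖ = (√(Real.cos (ω * t)))⁻¹ := by
  have hphase : -I * (ω / 4) * x ^ 2 * Real.tan (ω * t)
      = ((-(ω / 4) * x ^ 2 * Real.tan (ω * t) : ℝ) : ℂ) * I := by
    push_cast
    ring
  rw [lensFactor, norm_mul, hphase, norm_exp_ofReal_mul_I, norm_inv, norm_real,
    Real.norm_of_nonneg (Real.sqrt_nonneg _), mul_one]

theorem hasDerivAt_lensFactor_time (x : ℝ) {t : ℝ} (hc : 0 < Real.cos (ω * t)) :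
    HasDerivAt (fun s => lensFactor ω x s) (lensFactor ω x t
      * (ω * Real.tan (ω * t) / 2 - I * ω ^ 2 * x ^ 2 / (4 * Real.cos (ω * t) ^ 2))) t := by
  have hamp : HasDerivAt (fun s => (√(Real.cos (ω * s)) : ℂ)⁻¹)
      ((√(Real.cos (ω * t)))⁻¹ * (ω * Real.tan (ω * t) / 2) : ℝ) t := by
    simpa using (hasDerivAt_inv_sqrt_cos_mul hc).ofReal_comp
  have hphase := (((hasDerivAt_tan_mul hc.ne').ofReal_comp).const_mul (-I * (ω / 4) * x ^ 2)).cexp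
  refine (hamp.fun_mul hphase).congr_deriv ?_
  have hc' : (Real.cos (ω * t) : ℂ) ≠ 0 := by exact_mod_cast hc.ne'
  simp only [lensFactor]
  push_cast
  field_simp
  ring

theorem hasDerivAt_lensTransform_time (hχ : Differentiable ℝ (fun p : ℝ × ℝ => χ p.1 p.2))
    (hω : ω ≠ 0) (x : ℝ) {t : ℝ} (hc : 0 < Real.cos (ω * t)) :
    HasDerivAt (fun s => lensTransform ω χ x s)
      (lensFactor ω x t
        * ((ω * Real.tan (ω * t) / 2 - I * ω ^ 2 * x ^ 2 / (4 * Real.cos (ω * t) ^ 2))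
            * χ (x / Real.cos (ω * t)) (-Real.tan (ω * t) / ω)
          + x * ω * Real.tan (ω * t) / Real.cos (ω * t)
            * deriv (fun u => χ u (-Real.tan (ω * t) / ω)) (x / Real.cos (ω * t))
          - deriv (fun s => χ (x / Real.cos (ω * t)) s) (-Real.tan (ω * t) / ω)
            / Real.cos (ω * t) ^ 2)) t := by
  have hξ : HasDerivAt (fun s => x / Real.cos (ω * s))
      (x * ω * Real.tan (ω * t) / Real.cos (ω * t)) t := by
    refine ((hasDerivAt_const t x).div (hasDerivAt_const_mul ω).cos hc.ne').congr_deriv ?_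
    rw [Real.tan_eq_sin_div_cos]
    field_simp
    ring
  have hτ : HasDerivAt (fun s => -Real.tan (ω * s) / ω) (-1 / Real.cos (ω * t) ^ 2) t :=
    ((hasDerivAt_tan_mul hc.ne').neg.div_const ω).congr_deriv (by field_simp)
  refine ((hasDerivAt_lensFactor_time x hc).fun_mul
    ((hχ _).hasDerivAt_comp_prodMk hξ hτ)).congr_deriv ?_
  push_cast
  ring

theorem deriv_deriv_lensTransform_space (hχ : ContDiff ℝ 2 (fun p : ℝ × ℝ => χ p.1 p.2))
    (x t : ℝ) :
    deriv (fun u => deriv (fun v => lensTransform ω χ v t) u) x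
      = lensFactor ω x t
        * ((-I * ω * Real.tan (ω * t) / 2 - ω ^ 2 * Real.tan (ω * t) ^ 2 * x ^ 2 / 4)
            * χ (x / Real.cos (ω * t)) (-Real.tan (ω * t) / ω)
          - I * ω * Real.tan (ω * t) * x / Real.cos (ω * t)
            * deriv (fun u => χ u (-Real.tan (ω * t) / ω)) (x / Real.cos (ω * t))
          + deriv (fun u => deriv (fun v => χ v (-Real.tan (ω * t) / ω)) u) (x / Real.cos (ω * t))
            / Real.cos (ω * t) ^ 2) := by
  set τ := -Real.tan (ω * t) / ω
  have hdiff : Differentiable ℝ (fun p : ℝ × ℝ => χ p.1 p.2) := hχ.differentiable (by norm_num)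
  have hg : Differentiable ℝ (fun u => χ u τ) := fun u =>
    ((hdiff _).hasDerivAt_comp_prodMk (hasDerivAt_id u) (hasDerivAt_const u τ)).differentiableAt
  have hg' : Differentiable ℝ (deriv fun u => χ u τ) :=
    hχ.differentiable_deriv_fst_s17.comp (differentiable_id.prodMk (differentiable_const τ))
  have hgauss : (fun v => lensTransform ω χ v t) = fun v : ℝ =>
      (√(Real.cos (ω * t)) : ℂ)⁻¹ * cexp ((-I * (ω / 4) * Real.tan (ω * t)) * v ^ 2)
        * χ (v / Real.cos (ω * t)) τ := by
    funext v
    simp only [lensTransform, lensFactor]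
    congr 3
    ring
  rw [hgauss, deriv_deriv_gaussian_mul_comp_div _ _ _ hg hg' x, lensFactor]
  rw [show -I * (ω / 4) * Real.tan (ω * t) * (x : ℂ) ^ 2
    = -I * (ω / 4) * x ^ 2 * Real.tan (ω * t) by ring]
  linear_combination (√(Real.cos (ω * t)) : ℂ)⁻¹ * cexp (-I * (ω / 4) * x ^ 2 * Real.tan (ω * t))
    * (ω ^ 2 * Real.tan (ω * t) ^ 2 * x ^ 2 / 4 * χ (x / Real.cos (ω * t)) τ) * I_sq

end LensTransform

/-- On the strip `cos ωt > 0`, the substitution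
`ψ(x,t) = (cos ωt)^{-1/2} e^{-i(ω/4)x² tan ωt} χ(x/cos ωt, -tan(ωt)/ω)` maps solutions of
the autonomous equation `iχ_τ + h₀|χ|²χ = χ_ξξ` to solutions of the modified
harmonic-soliton equation `iψ_t + ψ_xx = (ω²/4)x²ψ + (h₀/cos ωt)|ψ|²ψ`. -/
theorem harmonic_soliton_transform
    (ω h₀ : ℝ) (hω : ω ≠ 0)
    (χ : ℝ → ℝ → ℂ)
    (hχ : ContDiff ℝ 2 (fun p : ℝ × ℝ => χ p.1 p.2))
    (hNLS : ∀ ξ τ : ℝ, Complex.I * deriv (fun s => χ ξ s) τ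
        + (h₀ : ℂ) * (‖χ ξ τ‖ : ℂ) ^ 2 * χ ξ τ
        = deriv (fun u => deriv (fun v => χ v τ) u) ξ)
    (ψ : ℝ → ℝ → ℂ)
    (hψ : ∀ x t : ℝ, ψ x t =
        (Real.sqrt (Real.cos (ω * t)) : ℂ)⁻¹ *
          Complex.exp (-Complex.I * ((ω : ℂ) / 4) * (x : ℂ) ^ 2 * (Real.tan (ω * t) : ℂ)) *
          χ (x / Real.cos (ω * t)) (-Real.tan (ω * t) / ω)) :
    ∀ x t : ℝ, 0 < Real.cos (ω * t) →
      Complex.I * deriv (fun s => ψ x s) t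
          + deriv (fun u => deriv (fun v => ψ v t) u) x
        = ((ω : ℂ) ^ 2 / 4) * (x : ℂ) ^ 2 * ψ x t
          + ((h₀ / Real.cos (ω * t) : ℝ) : ℂ) * (‖ψ x t‖ : ℂ) ^ 2 * ψ x t := by
  intro x t hc
  obtain rfl : ψ = lensTransform ω χ := funext fun x => funext (hψ x)
  have hsec : 1 + (Real.tan (ω * t) : ℂ) ^ 2 = (Real.cos (ω * t) : ℂ)⁻¹ ^ 2 := by
    exact_mod_cast (by rw [inv_pow, ← Real.inv_one_add_tan_sq hc.ne', inv_inv] :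
      1 + Real.tan (ω * t) ^ 2 = (Real.cos (ω * t))⁻¹ ^ 2)
  have hsqrt : (√(Real.cos (ω * t)) : ℂ)⁻¹ ^ 2 = (Real.cos (ω * t) : ℂ)⁻¹ := by
    exact_mod_cast (by rw [inv_pow, Real.sq_sqrt hc.le] :
      (√(Real.cos (ω * t)))⁻¹ ^ 2 = (Real.cos (ω * t))⁻¹)
  rw [(hasDerivAt_lensTransform_time (hχ.differentiable (by norm_num)) hω x hc).deriv,
    deriv_deriv_lensTransform_space hχ, ← hNLS, lensTransform, norm_mul, norm_lensFactor]
  set c := Real.cos (ω * t)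
  set T := Real.tan (ω * t)
  set F := lensFactor ω x t
  set X := χ (x / c) (-T / ω)
  push_cast
  linear_combination (-F * X * (ω ^ 2 * x ^ 2 / 4) * (c : ℂ)⁻¹ ^ 2) * I_sq
    - (F * X * (ω ^ 2 * x ^ 2 / 4)) * hsec - (F * X * h₀ * ‖X‖ ^ 2 / c) * hsqrt
end

section
/- Let k, α₀, β₀, γ₀, δ₀, ε₀, κ₀, μ₀ be real constants and let I be an interval containing 0 on which 1 + 4α₀t ≠ 0. Then the functions α(t) = α₀/(1+4α₀t), β(t) = β₀/(1+4α₀t), γ(t) = γ₀ − β₀²t/(1+4α₀t), δ(t) = kt + (δ₀ + kt)/(1+4α₀t), ε(t) = ε₀ − 2β₀t(δ₀ + kt)/(1+4α₀t), κ(t) = κ₀ − k²t³/3 − t(δ₀ + kt)²/(1+4α₀t) satisfy on I the Riccati-type system with coefficients a = 1, b = c = d = g = 0, f = 2k: namely α' + 4α² = 0, β' + 4αβ = 0, γ' + β² = 0, δ' + 4αδ = 2k, ε' = −2δβ, κ' = −δ², and moreover μ(t) = μ₀(1 + 4α₀t) satisfies μ' = 4αμ. -/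
/-! Each component is an explicit rational function of `t` whose only pole is the zero of
`1 + 4α₀t`, so every equation is checked by differentiating with the quotient rule and clearing
the denominator `(1 + 4α₀t)²`. -/

theorem hasDerivAt_const_add_mul (c a t : ℝ) : HasDerivAt (fun x => c + a * x) a t := by
  simpa using ((hasDerivAt_id' t).const_mul a).const_add c

theorem HasDerivAt.div_one_add_mul {f : ℝ → ℝ} {f' a t : ℝ} (hf : HasDerivAt f f' t)
    (h : 1 + a * t ≠ 0) :
    HasDerivAt (fun x => f x / (1 + a * x)) ((f' * (1 + a * t) - f t * a) / (1 + a * t) ^ 2) t :=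
  hf.fun_div (hasDerivAt_const_add_mul 1 a t) h

namespace InhomogeneousPlasma

variable {α₀ t : ℝ}

theorem deriv_const_div_one_add_mul (c : ℝ) (h : 1 + 4 * α₀ * t ≠ 0) :
    deriv (fun x => c / (1 + 4 * α₀ * x)) t = -(4 * α₀ * c) / (1 + 4 * α₀ * t) ^ 2 := by
  rw [((hasDerivAt_const t c).div_one_add_mul h).deriv]
  ring

theorem deriv_alpha_add (h : 1 + 4 * α₀ * t ≠ 0) :
    deriv (fun x => α₀ / (1 + 4 * α₀ * x)) t + 4 * (α₀ / (1 + 4 * α₀ * t)) ^ 2 = 0 := by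
  rw [deriv_const_div_one_add_mul α₀ h]
  field_simp
  ring

theorem deriv_beta_add (β₀ : ℝ) (h : 1 + 4 * α₀ * t ≠ 0) :
    deriv (fun x => β₀ / (1 + 4 * α₀ * x)) t
      + 4 * (α₀ / (1 + 4 * α₀ * t)) * (β₀ / (1 + 4 * α₀ * t)) = 0 := by
  rw [deriv_const_div_one_add_mul β₀ h]
  field_simp
  ring

theorem deriv_gamma_add (β₀ γ₀ : ℝ) (h : 1 + 4 * α₀ * t ≠ 0) :
    deriv (fun x => γ₀ - β₀ ^ 2 * x / (1 + 4 * α₀ * x)) t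
      + (β₀ / (1 + 4 * α₀ * t)) ^ 2 = 0 := by
  rw [((hasDerivAt_const t γ₀).fun_sub
    (((hasDerivAt_id' t).const_mul (β₀ ^ 2)).div_one_add_mul h)).deriv]
  field_simp
  ring

theorem deriv_delta_add (k δ₀ : ℝ) (h : 1 + 4 * α₀ * t ≠ 0) :
    deriv (fun x => k * x + (δ₀ + k * x) / (1 + 4 * α₀ * x)) t
      + 4 * (α₀ / (1 + 4 * α₀ * t)) * (k * t + (δ₀ + k * t) / (1 + 4 * α₀ * t)) = 2 * k := by
  rw [(((hasDerivAt_id' t).const_mul k).fun_add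
    ((hasDerivAt_const_add_mul δ₀ k t).div_one_add_mul h)).deriv]
  field_simp
  ring

theorem deriv_epsilon (k β₀ δ₀ ε₀ : ℝ) (h : 1 + 4 * α₀ * t ≠ 0) :
    deriv (fun x => ε₀ - 2 * β₀ * x * (δ₀ + k * x) / (1 + 4 * α₀ * x)) t
      = -(2 * (k * t + (δ₀ + k * t) / (1 + 4 * α₀ * t)) * (β₀ / (1 + 4 * α₀ * t))) := by
  rw [((hasDerivAt_const t ε₀).fun_sub ((((hasDerivAt_id' t).const_mul (2 * β₀)).fun_mul
    (hasDerivAt_const_add_mul δ₀ k t)).div_one_add_mul h)).deriv]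
  -- the form in which `field_simp` meets the denominator after expanding the products
  have h' : 1 + t * 4 * α₀ ≠ 0 := by convert h using 1; ring
  field_simp
  ring

theorem deriv_kappa (k δ₀ κ₀ : ℝ) (h : 1 + 4 * α₀ * t ≠ 0) :
    deriv (fun x => κ₀ - k ^ 2 * x ^ 3 / 3 - x * (δ₀ + k * x) ^ 2 / (1 + 4 * α₀ * x)) t
      = -(k * t + (δ₀ + k * t) / (1 + 4 * α₀ * t)) ^ 2 := by
  have hcubic := ((hasDerivAt_pow 3 t).const_mul (k ^ 2)).div_const 3
  have hquot := ((hasDerivAt_id' t).fun_mul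
    ((hasDerivAt_const_add_mul δ₀ k t).fun_pow 2)).div_one_add_mul h
  rw [(((hasDerivAt_const t κ₀).fun_sub hcubic).fun_sub hquot).deriv]
  have h' : 1 + t * 4 * α₀ ≠ 0 := by convert h using 1; ring
  field_simp
  ring

theorem deriv_mu (μ₀ : ℝ) (h : 1 + 4 * α₀ * t ≠ 0) :
    deriv (fun x => μ₀ * (1 + 4 * α₀ * x)) t
      = 4 * (α₀ / (1 + 4 * α₀ * t)) * (μ₀ * (1 + 4 * α₀ * t)) := by
  rw [((hasDerivAt_const_add_mul 1 (4 * α₀) t).const_mul μ₀).deriv]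
  field_simp

end InhomogeneousPlasma

theorem riccati_solution_inhomogeneous_plasma_general
    (k α₀ β₀ γ₀ δ₀ ε₀ κ₀ μ₀ : ℝ)
    (S : Set ℝ)
    (hne : ∀ t ∈ S, 1 + 4 * α₀ * t ≠ 0)
    (α β γ δ ε κ μ : ℝ → ℝ)
    (hα : ∀ t, α t = α₀ / (1 + 4 * α₀ * t))
    (hβ : ∀ t, β t = β₀ / (1 + 4 * α₀ * t))
    (hγ : ∀ t, γ t = γ₀ - β₀ ^ 2 * t / (1 + 4 * α₀ * t))
    (hδ : ∀ t, δ t = k * t + (δ₀ + k * t) / (1 + 4 * α₀ * t))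
    (hε : ∀ t, ε t = ε₀ - 2 * β₀ * t * (δ₀ + k * t) / (1 + 4 * α₀ * t))
    (hκ : ∀ t, κ t = κ₀ - k ^ 2 * t ^ 3 / 3 - t * (δ₀ + k * t) ^ 2 / (1 + 4 * α₀ * t))
    (hμ : ∀ t, μ t = μ₀ * (1 + 4 * α₀ * t)) :
    ∀ t ∈ S,
      deriv α t + 4 * (α t) ^ 2 = 0 ∧
      deriv β t + 4 * α t * β t = 0 ∧
      deriv γ t + (β t) ^ 2 = 0 ∧
      deriv δ t + 4 * α t * δ t = 2 * k ∧
      deriv ε t = -(2 * δ t * β t) ∧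
      deriv κ t = -(δ t) ^ 2 ∧
      deriv μ t = 4 * α t * μ t := by
  intro t ht
  have h := hne t ht
  rw [funext hα, funext hβ, funext hγ, funext hδ, funext hε, funext hκ, funext hμ]
  open InhomogeneousPlasma in
  exact ⟨deriv_alpha_add h, deriv_beta_add β₀ h, deriv_gamma_add β₀ γ₀ h, deriv_delta_add k δ₀ h,
    deriv_epsilon k β₀ δ₀ ε₀ h, deriv_kappa k δ₀ κ₀ h, deriv_mu μ₀ h⟩

/-- Explicit general solution of the Riccati-type system for a soliton in
linearly inhomogeneous plasma (`a = 1`, `f = 2k`, `b = c = d = g = 0`), with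
`1 + 4α₀t` nonvanishing on an interval `S` containing `0`. -/
theorem riccati_solution_inhomogeneous_plasma
    (k α₀ β₀ γ₀ δ₀ ε₀ κ₀ μ₀ : ℝ)
    (S : Set ℝ) (hS : Set.OrdConnected S) (h0S : (0:ℝ) ∈ S)
    (hne : ∀ t ∈ S, 1 + 4 * α₀ * t ≠ 0)
    (α β γ δ ε κ μ : ℝ → ℝ)
    (hα : ∀ t, α t = α₀ / (1 + 4 * α₀ * t))
    (hβ : ∀ t, β t = β₀ / (1 + 4 * α₀ * t))
    (hγ : ∀ t, γ t = γ₀ - β₀ ^ 2 * t / (1 + 4 * α₀ * t))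
    (hδ : ∀ t, δ t = k * t + (δ₀ + k * t) / (1 + 4 * α₀ * t))
    (hε : ∀ t, ε t = ε₀ - 2 * β₀ * t * (δ₀ + k * t) / (1 + 4 * α₀ * t))
    (hκ : ∀ t, κ t = κ₀ - k ^ 2 * t ^ 3 / 3 - t * (δ₀ + k * t) ^ 2 / (1 + 4 * α₀ * t))
    (hμ : ∀ t, μ t = μ₀ * (1 + 4 * α₀ * t)) :
    ∀ t ∈ S,
      deriv α t + 4 * (α t) ^ 2 = 0 ∧
      deriv β t + 4 * α t * β t = 0 ∧
      deriv γ t + (β t) ^ 2 = 0 ∧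
      deriv δ t + 4 * α t * δ t = 2 * k ∧
      deriv ε t = -(2 * δ t * β t) ∧
      deriv κ t = -(δ t) ^ 2 ∧
      deriv μ t = 4 * α t * μ t :=
  riccati_solution_inhomogeneous_plasma_general k α₀ β₀ γ₀ δ₀ ε₀ κ₀ μ₀ S hne α β γ δ ε κ μ hα hβ hγ
    hδ hε hκ hμ
end

section
/- Let k and h₀ be real constants and let χ : ℝ × ℝ → ℂ be twice continuously differentiable satisfying iχ_τ + h₀|χ|²χ = χ_ξξ. Then the function ψ(x, t) = e^{i(2ktx − 4k²t³/3)} χ(x − 2kt², −t) satisfies iψ_t + ψ_xx + 2kxψ = h₀|ψ|²ψ on ℝ × ℝ (Tappert's transformation, producing a soliton moving with acceleration in linearly inhomogeneous plasma). -/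
/-!
Write `ψ = e^{iθ} φ` with `φ(x, t) = χ(x - 2kt², -t)`, so `θ_x = 2kt` and `θ_t = 2kx - 4k²t²`.
In `iψ_t + ψ_xx` the cross term `2iθ_x φ_x` of `ψ_xx` cancels the transport term `-4ikt χ_ξ`
of `iψ_t`, the time reversal turns `iψ_t` into `-iχ_τ`, and the zeroth-order coefficient
`-θ_t - θ_x² + 2kx` vanishes. What is left is `e^{iθ}(χ_ξξ - iχ_τ) = h₀|χ|²χ e^{iθ}`, and
`|ψ| = |χ|` because the phase is real.
-/

open Complex Function

section PartialDerivatives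

variable {E : Type*} [NormedAddCommGroup E] [NormedSpace ℝ E] {χ : ℝ → ℝ → E}

theorem hasDerivAt_uncurry_comp_fderiv {γ₁ γ₂ : ℝ → ℝ} {a b t : ℝ}
    (hχ : DifferentiableAt ℝ (uncurry χ) (γ₁ t, γ₂ t))
    (h₁ : HasDerivAt γ₁ a t) (h₂ : HasDerivAt γ₂ b t) :
    HasDerivAt (fun s => χ (γ₁ s) (γ₂ s)) (fderiv ℝ (uncurry χ) (γ₁ t, γ₂ t) (a, b)) t :=
  (hχ.hasFDerivAt.comp_hasDerivAt t (h₁.prodMk h₂) :)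

theorem deriv_left_eq_fderiv_uncurry {u τ : ℝ} (hχ : DifferentiableAt ℝ (uncurry χ) (u, τ)) :
    deriv (fun v => χ v τ) u = fderiv ℝ (uncurry χ) (u, τ) (1, 0) :=
  (hasDerivAt_uncurry_comp_fderiv hχ (hasDerivAt_id u) (hasDerivAt_const u τ)).deriv

theorem deriv_right_eq_fderiv_uncurry {u τ : ℝ} (hχ : DifferentiableAt ℝ (uncurry χ) (u, τ)) :
    deriv (fun s => χ u s) τ = fderiv ℝ (uncurry χ) (u, τ) (0, 1) :=
  (hasDerivAt_uncurry_comp_fderiv hχ (hasDerivAt_const τ u) (hasDerivAt_id τ)).deriv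

theorem hasDerivAt_uncurry_comp_s19 {γ₁ γ₂ : ℝ → ℝ} {a b t : ℝ}
    (hχ : DifferentiableAt ℝ (uncurry χ) (γ₁ t, γ₂ t))
    (h₁ : HasDerivAt γ₁ a t) (h₂ : HasDerivAt γ₂ b t) :
    HasDerivAt (fun s => χ (γ₁ s) (γ₂ s))
      (a • deriv (fun v => χ v (γ₂ t)) (γ₁ t) + b • deriv (fun s => χ (γ₁ t) s) (γ₂ t)) t := by
  rw [deriv_left_eq_fderiv_uncurry hχ, deriv_right_eq_fderiv_uncurry hχ, ← map_smul, ← map_smul,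
    ← map_add]
  simpa using hasDerivAt_uncurry_comp_fderiv hχ h₁ h₂

theorem differentiable_deriv_left_of_contDiff {n : WithTop ℕ∞} (hχ : ContDiff ℝ n (uncurry χ))
    (hn : 2 ≤ n) (τ : ℝ) : Differentiable ℝ fun u => deriv (fun v => χ v τ) u := by
  have hdiff : Differentiable ℝ (uncurry χ) := hχ.differentiable (by positivity)
  have hfderiv : Differentiable ℝ (fderiv ℝ (uncurry χ)) :=
    (hχ.fderiv_right (m := 1) (by norm_num [one_add_one_eq_two, hn])).differentiable one_ne_zero
  simp_rw [deriv_left_eq_fderiv_uncurry (hdiff _)]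
  fun_prop

end PartialDerivatives

theorem deriv_deriv_cexp_mul {θ : ℝ → ℂ} {α : ℂ} (hθ : ∀ u, HasDerivAt θ α u) {g : ℝ → ℂ}
    (hg : Differentiable ℝ g) {x : ℝ} (hg' : DifferentiableAt ℝ (deriv g) x) :
    deriv (fun u => deriv (fun v => cexp (θ v) * g v) u) x
      = cexp (θ x) * (deriv (deriv g) x + 2 * α * deriv g x + α ^ 2 * g x) := by
  have hfirst : (fun u => deriv (fun v => cexp (θ v) * g v) u)
      = fun u => cexp (θ u) * (α * g u + deriv g u) := by
    funext u
    refine (((hθ u).cexp.mul (hg u).hasDerivAt)).deriv.trans ?_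
    ring
  rw [hfirst]
  refine ((hθ x).cexp.mul (((hg x).hasDerivAt.const_mul α).add hg'.hasDerivAt)).deriv.trans ?_
  simp only [Pi.add_apply]
  ring

noncomputable def tappertPhase (k x t : ℝ) : ℂ := I * (2 * k * t * x - 4 * k ^ 2 * t ^ 3 / 3)

theorem norm_cexp_tappertPhase (k x t : ℝ) : ‖cexp (tappertPhase k x t)‖ = 1 := by
  have h := norm_exp_ofReal_mul_I (2 * k * t * x - 4 * k ^ 2 * t ^ 3 / 3)
  push_cast at h
  rwa [tappertPhase, mul_comm]

theorem hasDerivAt_tappertPhase_space (k t u : ℝ) :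
    HasDerivAt (fun v => tappertPhase k v t) (2 * I * k * t) u := by
  have := (((hasDerivAt_id (u : ℂ)).comp_ofReal.const_mul (2 * k * t : ℂ)).sub_const
    (4 * k ^ 2 * t ^ 3 / 3 : ℂ)).const_mul I
  exact this.congr_deriv (by ring)

theorem hasDerivAt_tappertPhase_time (k x t : ℝ) :
    HasDerivAt (fun s => tappertPhase k x s) (I * (2 * k * x - 4 * k ^ 2 * t ^ 2)) t := by
  have := ((((hasDerivAt_id (t : ℂ)).comp_ofReal.const_mul (2 * k : ℂ)).mul_const (x : ℂ)).sub
    (((hasDerivAt_pow 3 (t : ℂ)).comp_ofReal.const_mul (4 * k ^ 2 : ℂ)).div_const 3)).const_mul I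
  exact this.congr_deriv (by push_cast; ring)

section TappertAnsatz

variable {χ : ℝ → ℝ → ℂ} (k : ℝ)

theorem deriv_tappert_time (hχ : Differentiable ℝ (uncurry χ)) (x t : ℝ) :
    deriv (fun s => cexp (tappertPhase k x s) * χ (x - 2 * k * s ^ 2) (-s)) t
      = cexp (tappertPhase k x t) *
        (I * (2 * k * x - 4 * k ^ 2 * t ^ 2) * χ (x - 2 * k * t ^ 2) (-t)
        - 4 * k * t * deriv (fun v => χ v (-t)) (x - 2 * k * t ^ 2)
        - deriv (fun s => χ (x - 2 * k * t ^ 2) s) (-t)) := by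
  have hpath := hasDerivAt_uncurry_comp_s19 (hχ _)
    (((hasDerivAt_pow 2 t).const_mul (2 * k)).const_sub x) (hasDerivAt_neg t)
  refine ((hasDerivAt_tappertPhase_time k x t).cexp.mul hpath).deriv.trans ?_
  simp only [real_smul]
  push_cast
  ring

theorem deriv_deriv_tappert_space (hχ : ContDiff ℝ 2 (uncurry χ)) (x t : ℝ) :
    deriv (fun u => deriv (fun v => cexp (tappertPhase k v t) * χ (v - 2 * k * t ^ 2) (-t)) u) x
      = cexp (tappertPhase k x t) *
        (deriv (fun u => deriv (fun v => χ v (-t)) u) (x - 2 * k * t ^ 2)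
          + 2 * (2 * I * k * t) * deriv (fun v => χ v (-t)) (x - 2 * k * t ^ 2)
          + (2 * I * k * t) ^ 2 * χ (x - 2 * k * t ^ 2) (-t)) := by
  have hχ₁ := differentiable_deriv_left_of_contDiff hχ le_rfl (-t)
  have hshift : deriv (fun v => χ (v - 2 * k * t ^ 2) (-t))
      = fun u => deriv (fun v => χ v (-t)) (u - 2 * k * t ^ 2) :=
    funext fun u => deriv_comp_sub_const (f := fun v => χ v (-t)) ..
  rw [deriv_deriv_cexp_mul (hasDerivAt_tappertPhase_space k t), hshift, deriv_comp_sub_const]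
  · exact (hχ.differentiable two_ne_zero).comp (f := fun v => (v - 2 * k * t ^ 2, -t)) (by fun_prop)
  · rw [hshift]
    fun_prop

end TappertAnsatz

/-- Tappert's transformation `ψ(x,t) = e^{i(2ktx - 4k²t³/3)} χ(x - 2kt², -t)`
maps solutions of the autonomous equation `iχ_τ + h₀|χ|²χ = χ_ξξ` to solutions of
`iψ_t + ψ_xx + 2kxψ = h₀|ψ|²ψ`, the equation of a soliton moving with acceleration in
linearly inhomogeneous plasma. -/
theorem tappert_transformation
    (k h₀ : ℝ)
    (χ : ℝ → ℝ → ℂ)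
    (hχ : ContDiff ℝ 2 (fun p : ℝ × ℝ => χ p.1 p.2))
    (hNLS : ∀ ξ τ : ℝ, Complex.I * deriv (fun s => χ ξ s) τ
        + (h₀ : ℂ) * ((‖χ ξ τ‖ : ℝ) : ℂ) ^ 2 * χ ξ τ
        = deriv (fun u => deriv (fun v => χ v τ) u) ξ)
    (ψ : ℝ → ℝ → ℂ)
    (hψ : ∀ x t : ℝ, ψ x t =
        Complex.exp (Complex.I *
            (2 * (k : ℂ) * (t : ℂ) * (x : ℂ) - 4 * (k : ℂ) ^ 2 * (t : ℂ) ^ 3 / 3)) *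
          χ (x - 2 * k * t ^ 2) (-t)) :
    ∀ x t : ℝ,
      Complex.I * deriv (fun s => ψ x s) t
          + deriv (fun u => deriv (fun v => ψ v t) u) x
          + 2 * (k : ℂ) * (x : ℂ) * ψ x t
        = (h₀ : ℂ) * ((‖ψ x t‖ : ℝ) : ℂ) ^ 2 * ψ x t := by
  obtain rfl : ψ = fun x t => cexp (tappertPhase k x t) * χ (x - 2 * k * t ^ 2) (-t) :=
    funext₂ hψ
  intro x t
  rw [deriv_tappert_time k (hχ.differentiable two_ne_zero), deriv_deriv_tappert_space k hχ,
    norm_mul, norm_cexp_tappertPhase, one_mul, ← hNLS]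
  linear_combination (2 * k * x * cexp (tappertPhase k x t) * χ (x - 2 * k * t ^ 2) (-t)) * I_sq
end
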